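/- arXiv:1801.07640 — 10 statements merged into one kernel-verified Lean document; each statement's English description precedes it below -/
import Mathlib

section
/- Let n ≥ k ≥ 1. Any k-fold banned binary sequence problem of length n has at most (2^k − 1)·2^(n−k) solutions. -/
/-!
Fix one `k`-set `S` and, for every `X : [n]∖S → {0,1}`, one banned pattern `g X ∈ f(S, X)`.
A solution `Y` never has `Y|_S = g (Y|_{[n]∖S})`, and the sequences that do form the graph of `g`,
which has `2^(n-k)` elements; the solutions therefore lie among the remaining
`2^n - 2^(n-k) = (2^k - 1)·2^(n-k)` sequences.
-/

/-- The common extension `X ∧ Z` of `X : [n]∖S → {0,1}` and `Z : S → {0,1}`. -/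
def mergeSeq (n : ℕ) (S : Finset (Fin n)) (X : {i : Fin n // i ∉ S} → Bool)
    (Z : {i : Fin n // i ∈ S} → Bool) : Fin n → Bool :=
  fun i => if h : i ∈ S then Z ⟨i, h⟩ else X ⟨i, h⟩

/-- `Y` is a solution to the `k`-fold banned binary sequence problem `f` of length `n`:
for every `k`-element subset `S` of `[n]`, `Y|_S ∉ f(S, Y|_{[n]∖S})`. -/
def IsSolution (n k : ℕ)
    (f : (S : Finset (Fin n)) → ({i : Fin n // i ∉ S} → Bool) →
      Set ({i : Fin n // i ∈ S} → Bool))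
    (Y : Fin n → Bool) : Prop :=
  ∀ S : Finset (Fin n), S.card = k →
    (fun i : {i : Fin n // i ∈ S} => Y i.1) ∉ f S (fun i => Y i.1)

theorem ncard_setOf_restrict_eq {ι β : Type*} (p : ι → Prop)
    (g : ({i // ¬p i} → β) → ({i // p i} → β)) :
    {Y : ι → β | (fun i : {i // p i} => Y i) = g (fun i => Y i)}.ncard =
      Nat.card ({i // ¬p i} → β) := by
  classical
  let e := Equiv.piEquivPiSubtypeProd p (fun _ => β)
  have hgraph : {Y : ι → β | (fun i : {i // p i} => Y i) = g (fun i => Y i)} =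
      Set.range fun X => e.symm (g X, X) := by
    ext Y
    refine ⟨fun hY => ⟨fun i => Y i, ?_⟩, ?_⟩
    · change (e Y).1 = g (e Y).2 at hY
      change e.symm (g (e Y).2, (e Y).2) = Y
      rw [← hY, e.symm_apply_apply]
    · rintro ⟨X, rfl⟩
      change (e _).1 = g (e _).2
      rw [e.apply_symm_apply]
  rw [hgraph, Set.ncard_range_of_injective]
  intro X X' h
  simpa using congrArg Prod.snd (e.symm.injective h)

theorem bbsp_card_solutions_le_general (n k : ℕ) (hkn : k ≤ n)
    (f : (S : Finset (Fin n)) → ({i : Fin n // i ∉ S} → Bool) →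
      Set ({i : Fin n // i ∈ S} → Bool))
    (hne : ∀ (S : Finset (Fin n)) (X : {i : Fin n // i ∉ S} → Bool),
      S.card = k → (f S X).Nonempty) :
    {Y : Fin n → Bool | IsSolution n k f Y}.ncard ≤ (2 ^ k - 1) * 2 ^ (n - k) := by
  obtain ⟨S, -, hS⟩ := Finset.exists_subset_card_eq (s := (Finset.univ : Finset (Fin n)))
    (by simpa using hkn)
  choose g hg using fun X => hne S X hS
  have hsub : {Y : Fin n → Bool | IsSolution n k f Y} ⊆
      {Y | (fun i : {i // i ∈ S} => Y i) = g (fun i => Y i)}ᶜ :=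
    fun Y hY hbanned => hY S hS (hbanned ▸ hg _)
  have hgraph := ncard_setOf_restrict_eq (β := Bool) (· ∈ S) g
  have hsplit : 2 ^ n = 2 ^ k * 2 ^ (n - k) := by rw [← pow_add, Nat.add_sub_cancel' hkn]
  calc _ ≤ _ := Set.ncard_le_ncard hsub
    _ = 2 ^ n - 2 ^ (n - k) := by
      rw [Set.ncard_compl, hgraph]
      simp [Fintype.card_subtype_compl, hS]
    _ = (2 ^ k - 1) * 2 ^ (n - k) := by rw [hsplit, Nat.sub_one_mul]

/-- Any `k`-fold banned binary sequence problem of length `n` (with `n ≥ k ≥ 1`)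
has at most `(2^k − 1)·2^(n−k)` solutions. -/
theorem bbsp_card_solutions_le (n k : ℕ) (hk : 1 ≤ k) (hkn : k ≤ n)
    (f : (S : Finset (Fin n)) → ({i : Fin n // i ∉ S} → Bool) →
      Set ({i : Fin n // i ∈ S} → Bool))
    (hne : ∀ (S : Finset (Fin n)) (X : {i : Fin n // i ∉ S} → Bool),
      S.card = k → (f S X).Nonempty) :
    {Y : Fin n → Bool | IsSolution n k f Y}.ncard ≤ (2 ^ k - 1) * 2 ^ (n - k) :=
  bbsp_card_solutions_le_general n k hkn f hne
end

section
/- Let n ≥ k ≥ 1. Any hereditary k-fold banned binary sequence problem of length n has at most ∑_{i=0}^{k−1} C(n,i) solutions. -/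
/-- A `k`-fold banned binary sequence problem `f` of length `n` is hereditary unless there is a
`k`-element subset `S` of `[n]` such that for each `Z_α : S → {0,1}` there is
`X_α : [n]∖S → {0,1}` with `Z_α ∉ f(S, X_α)`, and additionally, for `Z_α ≠ Z_β` the first
(least) index at which `X_α ∧ Z_α` and `X_β ∧ Z_β` differ lies in `S`. -/
def Hereditary (n k : ℕ)
    (f : (S : Finset (Fin n)) → ({i : Fin n // i ∉ S} → Bool) →
      Set ({i : Fin n // i ∈ S} → Bool)) : Prop :=
  ¬ ∃ S : Finset (Fin n), S.card = k ∧
      ∃ X : ({i : Fin n // i ∈ S} → Bool) → ({i : Fin n // i ∉ S} → Bool),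
        (∀ Z, Z ∉ f S (X Z)) ∧
        (∀ Z₁ Z₂, Z₁ ≠ Z₂ → ∀ i : Fin n,
          (∀ j : Fin n, j < i → mergeSeq n S (X Z₁) Z₁ j = mergeSeq n S (X Z₂) Z₂ j) →
          mergeSeq n S (X Z₁) Z₁ i ≠ mergeSeq n S (X Z₂) Z₂ i → i ∈ S)

/-!
A hereditary problem has no `k`-element set `S` order-shattered by its solutions: one solution
for each pattern on `S`, any two of them first differing inside `S`, would witness (with their
coordinates off `S` as the `X_α`) that the problem is not hereditary. Since order-shattering
passes to subsets, the solutions order-shatter only sets of size less than `k`. On the other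
hand, every family `A` of binary sequences of length `n` order-shatters at least `|A|` subsets
of `[n]`, as in Pajor's proof of the Sauer–Shelah lemma: split `A` by the first coordinate; a set
order-shattered by one half gives one avoiding `0`, a set order-shattered by both halves gives
one containing `0`.
-/

open Finset

/-- The pattern on `S` is given by a full sequence `z`, whose values off `S` are ignored. -/
def OrderShatters {n : ℕ} (A : Finset (Fin n → Bool)) (S : Finset (Fin n)) : Prop :=
  ∃ Y : (Fin n → Bool) → Fin n → Bool, (∀ z, Y z ∈ A) ∧ (∀ z, ∀ i ∈ S, Y z i = z i) ∧
    ∀ z₁ z₂ i, (∀ j < i, Y z₁ j = Y z₂ j) → Y z₁ i ≠ Y z₂ i → i ∈ S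

open scoped Classical in
noncomputable def orderShatterer {n : ℕ} (A : Finset (Fin n → Bool)) : Finset (Finset (Fin n)) :=
  univ.filter (OrderShatters A)

section OrderShatters

variable {n : ℕ}

@[simp]
lemma mem_orderShatterer {A : Finset (Fin n → Bool)} {S : Finset (Fin n)} :
    S ∈ orderShatterer A ↔ OrderShatters A S := by
  simp [orderShatterer]

lemma orderShatters_empty {A : Finset (Fin n → Bool)} {a : Fin n → Bool} (ha : a ∈ A) :
    OrderShatters A ∅ :=
  ⟨fun _ ↦ a, fun _ ↦ ha, by simp, fun _ _ _ _ h ↦ absurd rfl h⟩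

lemma OrderShatters.mono {A : Finset (Fin n → Bool)} {S T : Finset (Fin n)}
    (h : OrderShatters A S) (hTS : T ⊆ S) : OrderShatters A T := by
  classical
  obtain ⟨Y, hYA, hYS, hfirst⟩ := h
  let restrict (z : Fin n → Bool) (i : Fin n) : Bool := if i ∈ T then z i else false
  refine ⟨Y ∘ restrict, fun z ↦ hYA _, fun z i hi ↦ by simp [restrict, hYS _ i (hTS hi), hi],
    fun z₁ z₂ i hpre hne ↦ ?_⟩
  by_contra hi
  simp [restrict, hYS _ i (hfirst _ _ i hpre hne), hi] at hne

def tailsWithHead (b : Bool) (A : Finset (Fin (n + 1) → Bool)) : Finset (Fin n → Bool) :=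
  univ.filter fun y ↦ (Fin.cons b y : Fin (n + 1) → Bool) ∈ A

variable {A : Finset (Fin (n + 1) → Bool)}

@[simp]
lemma mem_tailsWithHead {b : Bool} {y : Fin n → Bool} :
    y ∈ tailsWithHead b A ↔ (Fin.cons b y : Fin (n + 1) → Bool) ∈ A := by
  simp [tailsWithHead]

lemma card_eq_card_tailsWithHead_add :
    #A = #(tailsWithHead false A) + #(tailsWithHead true A) := by
  have hfiber (b : Bool) : #(tailsWithHead b A) = #{x ∈ A | x 0 = b} := by
    refine card_bij (fun y _ ↦ Fin.cons b y) (fun y hy ↦ ?_) (fun _ _ _ _ h ↦ ?_) fun x hx ↦ ?_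
    · simpa using mem_tailsWithHead.1 hy
    · exact Fin.cons_right_injective (α := fun _ ↦ Bool) b h
    · obtain ⟨hxA, rfl⟩ := mem_filter.1 hx
      exact ⟨Fin.tail x, by simpa using hxA, Fin.cons_self_tail x⟩
  rw [hfiber, hfiber]
  exact (card_eq_sum_card_fiberwise (f := fun x ↦ x 0) fun _ _ ↦ mem_univ _).trans
    ((Fintype.sum_bool _).trans (add_comm _ _))

lemma OrderShatters.map_succ {b : Bool} {S : Finset (Fin n)}
    (h : OrderShatters (tailsWithHead b A) S) : OrderShatters A (S.map (Fin.succEmb n)) := by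
  obtain ⟨Y, hYA, hYS, hfirst⟩ := h
  refine ⟨fun z ↦ Fin.cons b (Y (Fin.tail z)), fun z ↦ mem_tailsWithHead.1 (hYA _), ?_, ?_⟩
  · simp only [mem_map, Fin.coe_succEmb]
    rintro z _ ⟨i, hi, rfl⟩
    exact hYS _ i hi
  · intro z₁ z₂ i hpre hne
    induction i using Fin.cases with
    | zero => exact absurd rfl hne
    | succ i =>
      refine mem_map_of_mem _ (hfirst _ _ i (fun j hj ↦ ?_) (by simpa using hne))
      simpa using hpre j.succ (Fin.succ_lt_succ_iff.2 hj)

lemma orderShatters_insert_zero_map_succ {S : Finset (Fin n)}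
    (h : ∀ b, OrderShatters (tailsWithHead b A) S) :
    OrderShatters A (insert 0 (S.map (Fin.succEmb n))) := by
  choose Y hYA hYS hfirst using h
  refine ⟨fun z ↦ Fin.cons (z 0) (Y (z 0) (Fin.tail z)), fun z ↦ mem_tailsWithHead.1 (hYA _ _),
    ?_, ?_⟩
  · simp only [mem_insert, mem_map, Fin.coe_succEmb]
    rintro z _ (rfl | ⟨i, hi, rfl⟩)
    · simp
    · exact hYS _ _ i hi
  · intro z₁ z₂ i hpre hne
    induction i using Fin.cases with
    | zero => exact mem_insert_self _ _
    | succ i =>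
      have hhead : z₁ 0 = z₂ 0 := by simpa using hpre 0 (Fin.succ_pos i)
      refine mem_insert_of_mem <| mem_map_of_mem _ <|
        hfirst (z₂ 0) (Fin.tail z₁) (Fin.tail z₂) i (fun j hj ↦ ?_) ?_
      · simpa [hhead] using hpre j.succ (Fin.succ_lt_succ_iff.2 hj)
      · simpa [hhead] using hne

end OrderShatters

theorem card_le_card_orderShatterer :
    ∀ {n : ℕ} (A : Finset (Fin n → Bool)), #A ≤ #(orderShatterer A)
  | 0, A => by
    obtain rfl | ⟨a, ha⟩ := A.eq_empty_or_nonempty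
    · simp
    · exact (card_le_one_of_subsingleton A).trans
        (card_pos.2 ⟨∅, mem_orderShatterer.2 (orderShatters_empty ha)⟩)
  | n + 1, A => by
    let F (b : Bool) := orderShatterer (tailsWithHead b A)
    have h0_notMem_map (S : Finset (Fin n)) : (0 : Fin (n + 1)) ∉ S.map (Fin.succEmb n) := by
      simp [Fin.succ_ne_zero]
    have hunion : #(F false ∪ F true) ≤ #{S ∈ orderShatterer A | 0 ∉ S} := by
      refine card_le_card_of_injOn (·.map (Fin.succEmb n)) (fun S hS ↦ ?_)
        (map_injective _).injOn
      obtain hS | hS := mem_union.1 hS <;>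
        exact mem_filter.2 ⟨mem_orderShatterer.2 (mem_orderShatterer.1 hS).map_succ,
          h0_notMem_map S⟩
    have hinter : #(F false ∩ F true) ≤ #{S ∈ orderShatterer A | 0 ∈ S} := by
      refine card_le_card_of_injOn (fun S ↦ insert 0 (S.map (Fin.succEmb n))) (fun S hS ↦ ?_)
        fun S _ T _ hST ↦ map_injective (Fin.succEmb n) ?_
      · have hS : ∀ b, S ∈ F b := by simpa using mem_inter.1 hS
        exact mem_filter.2 ⟨mem_orderShatterer.2 (orderShatters_insert_zero_map_succ
          fun b ↦ mem_orderShatterer.1 (hS b)), mem_insert_self _ _⟩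
      · simpa [erase_insert (h0_notMem_map _)] using congrArg (erase · 0) hST
    calc #A = #(tailsWithHead false A) + #(tailsWithHead true A) :=
          card_eq_card_tailsWithHead_add
      _ ≤ #(F false) + #(F true) :=
          add_le_add (card_le_card_orderShatterer _) (card_le_card_orderShatterer _)
      _ = #(F false ∪ F true) + #(F false ∩ F true) := (card_union_add_card_inter _ _).symm
      _ ≤ #{S ∈ orderShatterer A | 0 ∉ S} + #{S ∈ orderShatterer A | 0 ∈ S} :=
          add_le_add hunion hinter
      _ = #(orderShatterer A) := by rw [add_comm, card_filter_add_card_filter_not]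

lemma card_le_sum_choose_of_forall_card_lt {α : Type*} [Fintype α] {𝒮 : Finset (Finset α)}
    {k : ℕ} (h : ∀ S ∈ 𝒮, #S < k) : #𝒮 ≤ ∑ i ∈ range k, (Fintype.card α).choose i := by
  classical
  simp_rw [← card_univ, ← card_powersetCard]
  exact (card_le_card fun S hS ↦ mem_biUnion.2 ⟨#S, mem_range.2 (h S hS),
    mem_powersetCard_univ.2 rfl⟩).trans card_biUnion_le

section Hereditary

variable {n k : ℕ} {f : (S : Finset (Fin n)) → ({i : Fin n // i ∉ S} → Bool) →
  Set ({i : Fin n // i ∈ S} → Bool)}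

lemma Hereditary.not_orderShatters (hher : Hereditary n k f) {A : Finset (Fin n → Bool)}
    (hA : ∀ Y ∈ A, IsSolution n k f Y) {S : Finset (Fin n)} (hS : #S = k) :
    ¬ OrderShatters A S := by
  classical
  rintro ⟨Y, hYA, hYS, hfirst⟩
  let extend (Z : {i : Fin n // i ∈ S} → Bool) (i : Fin n) : Bool :=
    if h : i ∈ S then Z ⟨i, h⟩ else false
  have hrestrict (Z) : (fun i : {i // i ∈ S} ↦ Y (extend Z) i.1) = Z := by
    funext i
    simp [hYS _ _ i.2, extend]
  have hmerge (Z) : mergeSeq n S (fun i ↦ Y (extend Z) i.1) Z = Y (extend Z) := by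
    funext i
    by_cases hi : i ∈ S
    · simp [mergeSeq, hi, ← congrFun (hrestrict Z) ⟨i, hi⟩]
    · simp [mergeSeq, hi]
  refine hher ⟨S, hS, fun Z i ↦ Y (extend Z) i.1, fun Z ↦ ?_, fun Z₁ Z₂ _ i ↦ ?_⟩
  · simpa only [hrestrict] using hA _ (hYA (extend Z)) S hS
  · simpa only [hmerge] using hfirst _ _ i

lemma Hereditary.card_lt_of_mem_orderShatterer (hher : Hereditary n k f)
    {A : Finset (Fin n → Bool)} (hA : ∀ Y ∈ A, IsSolution n k f Y) {S : Finset (Fin n)}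
    (hS : S ∈ orderShatterer A) : #S < k := by
  by_contra! hkS
  obtain ⟨T, hTS, hT⟩ := exists_subset_card_eq hkS
  exact hher.not_orderShatters hA hT ((mem_orderShatterer.1 hS).mono hTS)

end Hereditary

theorem hereditary_bbsp_card_solutions_le_general (n k : ℕ)
    (f : (S : Finset (Fin n)) → ({i : Fin n // i ∉ S} → Bool) →
      Set ({i : Fin n // i ∈ S} → Bool))
    (hher : Hereditary n k f) :
    {Y : Fin n → Bool | IsSolution n k f Y}.ncard ≤
      ∑ i ∈ Finset.range k, n.choose i := by
  classical
  let A : Finset (Fin n → Bool) := {Y | IsSolution n k f Y}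
  have hA : ∀ Y ∈ A, IsSolution n k f Y := fun Y hY ↦ (mem_filter.1 hY).2
  calc {Y : Fin n → Bool | IsSolution n k f Y}.ncard = #A := by
        rw [← Set.ncard_coe_finset]; simp [A]
    _ ≤ #(orderShatterer A) := card_le_card_orderShatterer A
    _ ≤ ∑ i ∈ range k, n.choose i := by
        simpa using card_le_sum_choose_of_forall_card_lt fun S ↦
          hher.card_lt_of_mem_orderShatterer hA

/-- Any hereditary `k`-fold banned binary sequence problem of length `n` (with `n ≥ k ≥ 1`)
has at most `∑_{i=0}^{k−1} C(n,i)` solutions. -/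
theorem hereditary_bbsp_card_solutions_le (n k : ℕ) (hk : 1 ≤ k) (hkn : k ≤ n)
    (f : (S : Finset (Fin n)) → ({i : Fin n // i ∉ S} → Bool) →
      Set ({i : Fin n // i ∈ S} → Bool))
    (hne : ∀ (S : Finset (Fin n)) (X : {i : Fin n // i ∉ S} → Bool),
      S.card = k → (f S X).Nonempty)
    (hher : Hereditary n k f) :
    {Y : Fin n → Bool | IsSolution n k f Y}.ncard ≤
      ∑ i ∈ Finset.range k, n.choose i :=
  hereditary_bbsp_card_solutions_le_general n k f hher
end

section
/- Let n ≥ k ≥ 1. Any independent k-fold banned binary sequence problem of length n has at most ∑_{i=0}^{k−1} C(n,i) solutions. -/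
/-- A banned binary sequence problem is independent if `f(S,X) = f(S,Y)` for all
`X, Y : [n]∖S → {0,1}`. -/
def Independent (n : ℕ)
    (f : (S : Finset (Fin n)) → ({i : Fin n // i ∉ S} → Bool) →
      Set ({i : Fin n // i ∈ S} → Bool)) : Prop :=
  ∀ (S : Finset (Fin n)) (X Y : {i : Fin n // i ∉ S} → Bool), f S X = f S Y

/-!
Identify a binary sequence with the set of positions where it is `true`. If a family of solutions
shattered a `k`-set `S`, some solution would agree on `S` with a banned pattern of `f(S, ·)`, which
by independence is banned whatever the sequence is outside `S`. So the solutions form a family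
shattering no `k`-set, and the Sauer–Shelah lemma (in Pajor's form `#𝒜 ≤ #𝒜.shatterer`) bounds
its size by the number of sets of size less than `k`.
-/

open Finset

namespace Finset

variable {α : Type*} [Fintype α]

lemma card_le_sum_range_choose_of_not_shatters [DecidableEq α] {𝒜 : Finset (Finset α)} {k : ℕ}
    (h𝒜 : ∀ s : Finset α, #s = k → ¬𝒜.Shatters s) :
    #𝒜 ≤ ∑ i ∈ range k, (Fintype.card α).choose i := by
  have hshatterer : 𝒜.shatterer ⊆ (range k).biUnion fun i ↦ powersetCard i univ := by
    intro s hs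
    refine mem_biUnion.2 ⟨#s, mem_range.2 ?_, mem_powersetCard_univ.2 rfl⟩
    by_contra! hks
    obtain ⟨t, hts, htk⟩ := exists_subset_card_eq hks
    exact h𝒜 t htk ((mem_shatterer.1 hs).mono_right hts)
  calc #𝒜 ≤ #𝒜.shatterer := card_le_card_shatterer 𝒜
    _ ≤ ∑ i ∈ range k, #(powersetCard i (univ : Finset α)) :=
      (card_le_card hshatterer).trans card_biUnion_le
    _ = ∑ i ∈ range k, (Fintype.card α).choose i := by simp_rw [card_powersetCard, card_univ]

def boolSupport (Y : α → Bool) : Finset α := {i | Y i = true}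

lemma boolSupport_injective : Function.Injective (boolSupport (α := α)) := by
  intro Y Z h
  funext i
  have hi := congr(i ∈ $h)
  simp only [boolSupport, mem_filter, mem_univ, true_and] at hi
  exact Bool.eq_iff_iff.2 (Iff.of_eq hi)

lemma Shatters.exists_restrict_eq [DecidableEq α] {𝒴 : Finset (α → Bool)} {s : Finset α}
    (hs : (𝒴.image boolSupport).Shatters s) (Z : s → Bool) :
    ∃ Y ∈ 𝒴, (fun i : s ↦ Y i) = Z := by
  obtain ⟨_, hu, hsu⟩ := hs (t := (s.attach.filter (Z · = true)).map (.subtype _))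
    (by intro i; simp only [mem_map, mem_filter]; rintro ⟨j, -, rfl⟩; exact j.2)
  obtain ⟨Y, hY, rfl⟩ := mem_image.1 hu
  refine ⟨Y, hY, funext fun i ↦ Bool.eq_iff_iff.2 ?_⟩
  have hi := congr(i.1 ∈ $hsu)
  simpa [boolSupport, i.2] using hi

end Finset

lemma Independent.not_shatters_solutions {n k : ℕ}
    {f : (S : Finset (Fin n)) → ({i : Fin n // i ∉ S} → Bool) →
      Set ({i : Fin n // i ∈ S} → Bool)}
    (hind : Independent n f)
    (hne : ∀ (S : Finset (Fin n)) (X : {i : Fin n // i ∉ S} → Bool),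
      S.card = k → (f S X).Nonempty)
    {𝒴 : Finset (Fin n → Bool)} (h𝒴 : ∀ Y ∈ 𝒴, IsSolution n k f Y)
    {S : Finset (Fin n)} (hS : #S = k) :
    ¬(𝒴.image boolSupport).Shatters S := by
  intro hshatters
  obtain ⟨Z, hZ⟩ := hne S (fun _ ↦ false) hS
  obtain ⟨Y, hY, rfl⟩ := hshatters.exists_restrict_eq Z
  exact h𝒴 Y hY S hS (hind S _ _ ▸ hZ)

theorem independent_bbsp_card_solutions_le_general (n k : ℕ)
    (f : (S : Finset (Fin n)) → ({i : Fin n // i ∉ S} → Bool) →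
      Set ({i : Fin n // i ∈ S} → Bool))
    (hne : ∀ (S : Finset (Fin n)) (X : {i : Fin n // i ∉ S} → Bool),
      S.card = k → (f S X).Nonempty)
    (hind : Independent n f) :
    {Y : Fin n → Bool | IsSolution n k f Y}.ncard ≤
      ∑ i ∈ Finset.range k, n.choose i := by
  classical
  set 𝒴 := {Y : Fin n → Bool | IsSolution n k f Y}.toFinset
  have h𝒴 : ∀ Y ∈ 𝒴, IsSolution n k f Y := fun Y hY ↦ Set.mem_toFinset.1 hY
  calc {Y : Fin n → Bool | IsSolution n k f Y}.ncard
      = #(𝒴.image boolSupport) := by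
        rw [Set.ncard_eq_toFinset_card', card_image_of_injective _ boolSupport_injective]
    _ ≤ ∑ i ∈ range k, (Fintype.card (Fin n)).choose i :=
        card_le_sum_range_choose_of_not_shatters fun S hS ↦
          hind.not_shatters_solutions hne h𝒴 hS
    _ = ∑ i ∈ Finset.range k, n.choose i := by rw [Fintype.card_fin]

/-- Any independent `k`-fold banned binary sequence problem of length `n` (with `n ≥ k ≥ 1`)
has at most `∑_{i=0}^{k−1} C(n,i)` solutions. -/
theorem independent_bbsp_card_solutions_le (n k : ℕ) (hk : 1 ≤ k) (hkn : k ≤ n)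
    (f : (S : Finset (Fin n)) → ({i : Fin n // i ∉ S} → Bool) →
      Set ({i : Fin n // i ∈ S} → Bool))
    (hne : ∀ (S : Finset (Fin n)) (X : {i : Fin n // i ∉ S} → Bool),
      S.card = k → (f S X).Nonempty)
    (hind : Independent n f) :
    {Y : Fin n → Bool | IsSolution n k f Y}.ncard ≤
      ∑ i ∈ Finset.range k, n.choose i :=
  independent_bbsp_card_solutions_le_general n k f hne hind
end

section
/- (Sauer-Shelah Lemma) Let (X, F) be a set system of VC-dimension k, i.e. k is the largest size of a subset of X shattered by F. Then for every finite subset A ⊆ X of size n, the number of sets in the projection F_A = { F ∩ A : F ∈ F } is at most ∑_{i=0}^{k} C(n,i). -/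
/-- A set system `F` on `X` shatters a finite set `A` if every subset of `A` is cut out
by a member of `F`, i.e. the projection of `F` onto `A` is the full power set of `A`. -/
def Shatters {X : Type*} (F : Set (Set X)) (A : Finset X) : Prop :=
  ∀ B ⊆ A, ∃ C ∈ F, ∀ a ∈ A, (a ∈ C ↔ a ∈ B)

/-!
Restricting `F` to a finite set `A` gives a family `traceFinset F A` of finsets of the finite type
`↥A`, with as many members as the projection `F_A`. A set shattered by this family is, viewed
inside `X`, shattered by `F`, so its VC-dimension is at most `k`, and Mathlib's Sauer–Shelah
bound for families of finsets of a finite type applies.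
-/

open scoped Finset

section

variable {X : Type*}

open Classical in
noncomputable def traceFinset (F : Set (Set X)) (A : Finset X) : Finset (Finset A) :=
  {s | ∃ C ∈ F, ∀ a : A, a ∈ s ↔ ↑a ∈ C}

lemma mem_traceFinset {F : Set (Set X)} {A : Finset X} {s : Finset A} :
    s ∈ traceFinset F A ↔ ∃ C ∈ F, ∀ a : A, a ∈ s ↔ ↑a ∈ C := by
  simp [traceFinset]

lemma ncard_projection_le_card_traceFinset (F : Set (Set X)) (A : Finset X) :
    {B : Set X | ∃ C ∈ F, B = C ∩ ↑A}.ncard ≤ #(traceFinset F A) := by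
  classical
  have hinj := Set.ncard_le_ncard_of_injOn (fun B : Set X => ({a : A | ↑a ∈ B} : Finset A))
    (s := {B : Set X | ∃ C ∈ F, B = C ∩ ↑A}) (t := ↑(traceFinset F A)) ?_ ?_
    (Finset.finite_toSet _)
  · simpa using hinj
  · rintro B ⟨C, hC, rfl⟩
    exact Finset.mem_coe.2 <| mem_traceFinset.2 ⟨C, hC, fun a => by simp⟩
  · rintro B₁ ⟨C₁, -, rfl⟩ B₂ ⟨C₂, -, rfl⟩ h
    ext x
    simp only [Set.mem_inter_iff, Finset.mem_coe]
    refine and_congr_left fun hx => ?_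
    simpa [hx] using Finset.ext_iff.1 h ⟨x, hx⟩

lemma shatters_map_subtype_of_shatters_traceFinset [DecidableEq X] {F : Set (Set X)}
    {A : Finset X} {s : Finset A} (hs : (traceFinset F A).Shatters s) :
    Shatters F (s.map (Function.Embedding.subtype _)) := by
  intro B hB
  obtain ⟨u, hu, hsu⟩ := hs (Finset.filter_subset (fun a : A => ↑a ∈ B) s)
  obtain ⟨C, hC, hCu⟩ := mem_traceFinset.1 hu
  refine ⟨C, hC, ?_⟩
  simp only [Finset.mem_map, Function.Embedding.coe_subtype]
  rintro _ ⟨a, ha, rfl⟩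
  have hau : a ∈ u ↔ a ∈ s ∩ u := by simp [ha]
  rw [← hCu, hau, hsu, Finset.mem_filter]
  simp [ha]

lemma vcDim_traceFinset_le [DecidableEq X] {F : Set (Set X)} {k : ℕ}
    (hmax : ∀ A : Finset X, Shatters F A → A.card ≤ k) (A : Finset X) :
    (traceFinset F A).vcDim ≤ k :=
  Finset.sup_le fun s hs => by
    simpa using hmax _ (shatters_map_subtype_of_shatters_traceFinset (Finset.mem_shatterer.1 hs))

end

theorem sauer_shelah_general {X : Type*} (F : Set (Set X)) (k : ℕ)
    (hmax : ∀ A : Finset X, Shatters F A → A.card ≤ k)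
    (A : Finset X) (n : ℕ) (hA : A.card = n) :
    {B : Set X | ∃ C ∈ F, B = C ∩ ↑A}.ncard ≤ ∑ i ∈ Finset.range (k + 1), n.choose i := by
  classical
  calc {B : Set X | ∃ C ∈ F, B = C ∩ ↑A}.ncard
      ≤ #(traceFinset F A) := ncard_projection_le_card_traceFinset F A
    _ ≤ #(traceFinset F A).shatterer := Finset.card_le_card_shatterer _
    _ ≤ ∑ i ∈ Finset.Iic (traceFinset F A).vcDim, (Fintype.card A).choose i :=
        Finset.card_shatterer_le_sum_vcDim
    _ ≤ ∑ i ∈ Finset.Iic k, n.choose i := by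
        rw [Fintype.card_coe, hA]
        exact Finset.sum_le_sum_of_subset (Finset.Iic_subset_Iic.2 (vcDim_traceFinset_le hmax A))
    _ = ∑ i ∈ Finset.range (k + 1), n.choose i := by rw [Nat.range_succ_eq_Iic]

/-- Sauer-Shelah Lemma: if `F` has VC-dimension `k` (i.e. `k` is the largest size of a
subset shattered by `F`), then for every finite `A ⊆ X` of size `n` the projection
`F_A = { C ∩ A : C ∈ F }` has at most `∑_{i=0}^{k} C(n,i)` members. -/
theorem sauer_shelah {X : Type*} (F : Set (Set X)) (k : ℕ)
    (hshat : ∃ A : Finset X, A.card = k ∧ Shatters F A)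
    (hmax : ∀ A : Finset X, Shatters F A → A.card ≤ k)
    (A : Finset X) (n : ℕ) (hA : A.card = n) :
    {B : Set X | ∃ C ∈ F, B = C ∩ ↑A}.ncard ≤ ∑ i ∈ Finset.range (k + 1), n.choose i :=
  sauer_shelah_general F k hmax A n hA
end

section
/- (Thicket Sauer-Shelah Lemma) Let (X, F) be a set system of thicket dimension k. Then for every binary element tree of height n with labels from X, the number of leaves that are properly labeled by some member of F is at most ∑_{i=0}^{k} C(n,i). -/
/-- A binary element tree of height `n` with labels from `X` is (the restriction to binary
sequences of length `< n` of) a function `T : 2^{<ω} → X`.  A leaf `τ : 2^n` is properly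
labeled by `A ⊆ X` if for all `m < n`, the label at the initial segment `τ|_{[m]}` belongs
to `A` iff `τ(m) = 1`. -/
def ProperlyLabeled {X : Type*} (T : List Bool → X) {n : ℕ} (τ : Fin n → Bool)
    (A : Set X) : Prop :=
  ∀ m : Fin n, (T ((List.ofFn τ).take m.1) ∈ A ↔ τ m = true)

/-- The set system `F` has thicket dimension `k`: there is a binary element tree of height `k`
in which every leaf is properly labeled by some member of `F`, and no such tree of
height `k+1`. -/
def ThicketDimEq {X : Type*} (F : Set (Set X)) (k : ℕ) : Prop :=
  (∃ T : List Bool → X, ∀ τ : Fin k → Bool, ∃ A ∈ F, ProperlyLabeled T τ A) ∧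
    ∀ m : ℕ, k < m →
      ¬ ∃ T : List Bool → X, ∀ τ : Fin m → Bool, ∃ A ∈ F, ProperlyLabeled T τ A
/-! Induct on the height `n`, splitting leaves by their first bit. A leaf going left (right) from
the root `x` is properly labeled by `F` exactly when its tail is properly labeled, in the
corresponding subtree, by `F₀ = {A ∈ F | x ∉ A}` (`F₁ = {A ∈ F | x ∈ A}`). Neither subfamily
shatters a thicket that `F` does not, and if both shattered height `j`, hanging the two witness
trees below `x` would make `F` shatter height `j + 1`. So one of them satisfies the bound for
`j` and the other the bound for `j + 1`, and Pascal's rule adds these up. -/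

open Finset

theorem Nat.sum_range_succ_choose_succ (n j : ℕ) :
    ∑ i ∈ range (j + 1), (n + 1).choose i =
      ∑ i ∈ range (j + 1), n.choose i + ∑ i ∈ range j, n.choose i := by
  rw [sum_range_succ', sum_range_succ' n.choose]
  simp only [Nat.choose_succ_succ', sum_add_distrib, Nat.choose_zero_right]
  ring

section

variable {X : Type*}

theorem properlyLabeled_cons_iff (T : List Bool → X) {n : ℕ} (b : Bool) (σ : Fin n → Bool)
    (A : Set X) :
    ProperlyLabeled T (Fin.cons b σ : Fin (n + 1) → Bool) A ↔
      (T [] ∈ A ↔ b = true) ∧ ProperlyLabeled (fun l => T (b :: l)) σ A := by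
  simp [ProperlyLabeled, Fin.forall_fin_succ, List.ofFn_succ]

def ThicketShatters (F : Set (Set X)) (m : ℕ) : Prop :=
  ∃ T : List Bool → X, ∀ τ : Fin m → Bool, ∃ A ∈ F, ProperlyLabeled T τ A

theorem ThicketShatters.mono {F G : Set (Set X)} (hFG : F ⊆ G) {m : ℕ}
    (hF : ThicketShatters F m) : ThicketShatters G m :=
  let ⟨T, hT⟩ := hF
  ⟨T, fun τ => let ⟨A, hA, hτ⟩ := hT τ; ⟨A, hFG hA, hτ⟩⟩

theorem thicketShatters_succ {F : Set (Set X)} {j : ℕ} (x : X)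
    (h₀ : ThicketShatters {A ∈ F | x ∉ A} j) (h₁ : ThicketShatters {A ∈ F | x ∈ A} j) :
    ThicketShatters F (j + 1) := by
  obtain ⟨T₀, hT₀⟩ := h₀
  obtain ⟨T₁, hT₁⟩ := h₁
  refine ⟨fun | [] => x | b :: l => if b then T₁ l else T₀ l, fun τ => ?_⟩
  induction τ using Fin.consCases with
  | cons b σ =>
    cases b with
    | false =>
      obtain ⟨A, ⟨hA, hxA⟩, hσ⟩ := hT₀ σ
      exact ⟨A, hA, (properlyLabeled_cons_iff _ _ _ _).2 ⟨by simpa using hxA, hσ⟩⟩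
    | true =>
      obtain ⟨A, ⟨hA, hxA⟩, hσ⟩ := hT₁ σ
      exact ⟨A, hA, (properlyLabeled_cons_iff _ _ _ _).2 ⟨by simpa using hxA, hσ⟩⟩

def properlyLabeledLeaves (F : Set (Set X)) (T : List Bool → X) (n : ℕ) : Set (Fin n → Bool) :=
  {τ | ∃ A ∈ F, ProperlyLabeled T τ A}

theorem properlyLabeledLeaves_eq_empty {F : Set (Set X)} (hF : ¬ ThicketShatters F 0)
    (T : List Bool → X) (n : ℕ) : properlyLabeledLeaves F T n = ∅ :=
  Set.eq_empty_of_forall_notMem fun _ ⟨_, hA, _⟩ => hF ⟨T, fun _ => ⟨_, hA, fun m => m.elim0⟩⟩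

theorem properlyLabeledLeaves_succ_subset (F : Set (Set X)) (T : List Bool → X) (n : ℕ) :
    properlyLabeledLeaves F T (n + 1) ⊆
      Fin.cons false '' properlyLabeledLeaves {A ∈ F | T [] ∉ A} (fun l => T (false :: l)) n ∪
        Fin.cons true '' properlyLabeledLeaves {A ∈ F | T [] ∈ A} (fun l => T (true :: l)) n := by
  intro τ hτ
  induction τ using Fin.consCases with
  | cons b σ =>
    obtain ⟨A, hA, hσ⟩ := hτ
    obtain ⟨hroot, hσ⟩ := (properlyLabeled_cons_iff _ _ _ _).1 hσ
    cases b with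
    | false => exact .inl ⟨σ, ⟨A, ⟨hA, by simpa using hroot⟩, hσ⟩, rfl⟩
    | true => exact .inr ⟨σ, ⟨A, ⟨hA, by simpa using hroot⟩, hσ⟩, rfl⟩

theorem ncard_properlyLabeledLeaves_succ_le (F : Set (Set X)) (T : List Bool → X) (n : ℕ) :
    (properlyLabeledLeaves F T (n + 1)).ncard ≤
      (properlyLabeledLeaves {A ∈ F | T [] ∉ A} (fun l => T (false :: l)) n).ncard +
        (properlyLabeledLeaves {A ∈ F | T [] ∈ A} (fun l => T (true :: l)) n).ncard :=
  calc _ ≤ _ := Set.ncard_le_ncard (properlyLabeledLeaves_succ_subset F T n)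
    _ ≤ _ := Set.ncard_union_le _ _
    _ ≤ _ := add_le_add (Set.ncard_image_le (Set.toFinite _)) (Set.ncard_image_le (Set.toFinite _))

theorem ncard_properlyLabeledLeaves_le {F : Set (Set X)} {k : ℕ} (hF : ¬ ThicketShatters F k)
    (T : List Bool → X) (n : ℕ) :
    (properlyLabeledLeaves F T n).ncard ≤ ∑ i ∈ range k, n.choose i := by
  induction n generalizing F k T with
  | zero =>
    cases k with
    | zero => simp [properlyLabeledLeaves_eq_empty hF]
    | succ j =>
      calc _ ≤ Nat.card (Fin 0 → Bool) := Set.ncard_le_card _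
        _ = Nat.choose 0 0 := by simp
        _ ≤ _ := single_le_sum (by simp) (by simp)
  | succ n ih =>
    cases k with
    | zero => simp [properlyLabeledLeaves_eq_empty hF]
    | succ j =>
      have hsplit := ncard_properlyLabeledLeaves_succ_le F T n
      have hnot :
          ¬ ThicketShatters {A ∈ F | T [] ∉ A} j ∨ ¬ ThicketShatters {A ∈ F | T [] ∈ A} j :=
        not_and_or.1 fun h => hF (thicketShatters_succ (T []) h.1 h.2)
      have hsub (p : Set X → Prop) : ¬ ThicketShatters {A ∈ F | p A} (j + 1) :=
        mt (.mono (Set.sep_subset F p)) hF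
      rw [Nat.sum_range_succ_choose_succ]
      rcases hnot with h₀ | h₁
      · linarith [ih h₀ (fun l => T (false :: l)), ih (hsub (T [] ∈ ·)) (fun l => T (true :: l))]
      · linarith [ih (hsub (T [] ∉ ·)) (fun l => T (false :: l)), ih h₁ (fun l => T (true :: l))]

end

/-- Thicket Sauer-Shelah Lemma: if `F` has thicket dimension `k`, then in any binary element
tree of height `n` the number of leaves properly labeled by some member of `F` is at most
`∑_{i=0}^{k} C(n,i)`. -/
theorem thicket_sauer_shelah {X : Type*} (F : Set (Set X)) (k : ℕ)
    (hdim : ThicketDimEq F k) (n : ℕ) (T : List Bool → X) :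
    {τ : Fin n → Bool | ∃ A ∈ F, ProperlyLabeled T τ A}.ncard ≤
      ∑ i ∈ Finset.range (k + 1), n.choose i :=
  ncard_properlyLabeledLeaves_le (hdim.2 (k + 1) k.lt_succ_self) T n
end

section
/- (Weak law of large numbers for thickets) Let (X, μ) be a probability space and S ⊆ X a measurable event. Fix ε > 0 and an integer n ≥ 1. Then the μ^{2^n−1}-probability of the set of tuples x̄ = (x_σ)_{σ ∈ 2^{<n}} ∈ X^{2^n−1} such that |test(x̄, S) − μ(S)| ≥ ε is at most 1/(4nε²). -/
/-!
Along the characteristic path, the answer at level `m` is read off the single node reached by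
the answers so far, and different levels read different nodes. So the event "the characteristic
path is `b`" is a cylinder of the product measure, of probability
`∏ m, μ (if b m then S else Sᶜ)`: the path is a sequence of `n` independent Bernoulli(`μ S`)
bits, and `test(x̄, S)` is their sample mean. Chebyshev's inequality, with Popoviciu's bound
`1/4` on the variance of a `[0, 1]`-valued variable, gives the bound.
-/

open MeasureTheory

/- The characteristic path of `S` through a test tree `x = (x_σ)_{σ ∈ 2^{<n}}` (here a node
`σ` of length `i < n` is encoded as the pair `⟨i, σ⟩` in `Σ i : Fin n, (Fin i → Bool)`):
the `m`-th entry of the path is `1` iff the element of the tree reached after following the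
first `m` answers lies in `S`. -/
open Classical in
noncomputable def charPath {X : Type*} (S : Set X) {n : ℕ}
    (x : (Σ i : Fin n, (Fin i.1 → Bool)) → X) (m : ℕ) (hm : m < n) : Bool :=
  if x ⟨⟨m, hm⟩, fun j : Fin m => charPath S x j.1 (j.2.trans hm)⟩ ∈ S then true else false
termination_by m

/-- `test(x̄, S)`: the fraction of the `n` elements along the characteristic path of `S`
through the test tree `x̄` that lie in `S`. -/
noncomputable def ttest {X : Type*} (S : Set X) {n : ℕ}
    (x : (Σ i : Fin n, (Fin i.1 → Bool)) → X) : ℝ :=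
  (Finset.univ.filter (fun m : Fin n => charPath S x m.1 m.2 = true)).card / n

open ProbabilityTheory

section SampleMean

variable {α : Type*} {n : ℕ}

noncomputable def sampleMean (f : α → ℝ) (ω : Fin n → α) : ℝ := (∑ i, f (ω i)) / n

lemma sampleMean_eq_smul_sum (f : α → ℝ) :
    sampleMean (n := n) f = (n : ℝ)⁻¹ • ∑ i, fun ω : Fin n → α => f (ω i) := by
  ext ω
  simp [sampleMean, div_eq_inv_mul]

variable [MeasurableSpace α] {ν : Measure α} [IsProbabilityMeasure ν]

lemma memLp_sampleMean {f : α → ℝ} {p : ENNReal} (hf : MemLp f p ν) :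
    MemLp (sampleMean f) p (Measure.pi fun _ : Fin n => ν) := by
  rw [sampleMean_eq_smul_sum]
  exact (memLp_finsetSum' _ fun i _ =>
    hf.comp_measurePreserving (measurePreserving_eval _ i)).const_smul _

lemma integral_sampleMean {f : α → ℝ} (hf : Integrable f ν) (hn : 0 < n) :
    ∫ ω, sampleMean f ω ∂(Measure.pi fun _ : Fin n => ν) = ∫ a, f a ∂ν := by
  simp only [sampleMean, integral_div]
  rw [integral_finsetSum _ fun i _ => integrable_comp_eval hf,
    Finset.sum_congr rfl fun i _ => integral_comp_eval hf.aestronglyMeasurable]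
  simp only [Finset.sum_const, Finset.card_univ, Fintype.card_fin, nsmul_eq_mul]
  field_simp

lemma variance_sampleMean {f : α → ℝ} (hf : MemLp f 2 ν) :
    Var[sampleMean f; Measure.pi fun _ : Fin n => ν] = Var[f; ν] / n := by
  rw [sampleMean_eq_smul_sum, variance_smul, variance_sum_pi fun _ => hf]
  rcases n.eq_zero_or_pos with rfl | hn
  · simp
  · simp only [Finset.sum_const, Finset.card_univ, Fintype.card_fin, nsmul_eq_mul]
    field_simp

theorem measure_abs_sampleMean_sub_integral_ge_le {f : α → ℝ} (hf : Measurable f)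
    (hf01 : ∀ a, f a ∈ Set.Icc (0 : ℝ) 1) (hn : 0 < n) {ε : ℝ} (hε : 0 < ε) :
    Measure.pi (fun _ : Fin n => ν) {ω | ε ≤ |sampleMean f ω - ∫ a, f a ∂ν|} ≤
      ENNReal.ofReal (1 / (4 * n * ε ^ 2)) := by
  have hfL2 : MemLp f 2 ν := memLp_of_bounded (ae_of_all _ hf01) hf.aestronglyMeasurable 2
  have hfvar : Var[f; ν] ≤ 1 / 4 := by
    convert variance_le_sq_of_bounded (ae_of_all ν hf01) hf.aemeasurable using 1
    norm_num
  calc _ ≤ ENNReal.ofReal (Var[sampleMean f; Measure.pi fun _ : Fin n => ν] / ε ^ 2) := by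
        have := meas_ge_le_variance_div_sq (memLp_sampleMean (n := n) hfL2) hε
        rwa [integral_sampleMean (hfL2.integrable one_le_two) hn] at this
    _ ≤ ENNReal.ofReal (1 / 4 / n / ε ^ 2) := by
        rw [variance_sampleMean hfL2]
        gcongr
    _ = ENNReal.ofReal (1 / (4 * n * ε ^ 2)) := by rw [div_div, div_div, mul_assoc]

end SampleMean

section DecideMem

variable {X : Type*}

open Classical

lemma preimage_decide_mem_true (S : Set X) : (fun y => decide (y ∈ S)) ⁻¹' {true} = S := by
  ext; simp

variable [MeasurableSpace X]

lemma measurable_decide_mem {S : Set X} (hS : MeasurableSet S) :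
    Measurable fun y : X => decide (y ∈ S) :=
  measurable_to_countable' fun c => by
    cases c
    · convert hS.compl using 1; ext; simp
    · exact (preimage_decide_mem_true S).symm ▸ hS

lemma integral_map_decide_mem (μ : Measure X) {S : Set X} (hS : MeasurableSet S) :
    ∫ c, (if c then (1 : ℝ) else 0) ∂(μ.map fun y => decide (y ∈ S)) = μ.real S := by
  rw [integral_map (measurable_decide_mem hS).aemeasurable .of_discrete,
    ← integral_indicator_one hS]
  congr with y
  simp [Set.indicator_apply]

end DecideMem

namespace TestTree

open Classical

variable {X : Type*} {n : ℕ}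

abbrev Node (n : ℕ) : Type := Σ i : Fin n, (Fin i.1 → Bool)

def node (b : Fin n → Bool) (i : Fin n) : Node n :=
  ⟨i, fun j => b ⟨j, j.2.trans i.2⟩⟩

noncomputable def charBranch (S : Set X) (x : Node n → X) (i : Fin n) : Bool :=
  charPath S x i i.2

lemma node_congr {b b' : Fin n → Bool} {i : Fin n} (h : ∀ j < i, b j = b' j) :
    node b i = node b' i := by
  unfold node
  congr 1
  funext j
  exact h _ j.2

lemma charBranch_apply (S : Set X) (x : Node n → X) (i : Fin n) :
    charBranch S x i = decide (x (node (charBranch S x) i) ∈ S) := by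
  rw [charBranch, charPath]
  rfl

lemma charBranch_eq_iff {S : Set X} {x : Node n → X} {b : Fin n → Bool} :
    charBranch S x = b ↔ ∀ i, b i = decide (x (node b i) ∈ S) := by
  refine ⟨fun h => h ▸ charBranch_apply S x, fun hb => funext fun ⟨i, hi⟩ => ?_⟩
  induction i using Nat.strong_induction_on with
  | _ i ih => rw [charBranch_apply, hb, node_congr fun j hj => ih j hj j.2]

lemma ttest_eq_sampleMean (S : Set X) (x : Node n → X) :
    ttest S x = sampleMean (fun c : Bool => if c then (1 : ℝ) else 0) (charBranch S x) := by
  rw [ttest, sampleMean, Finset.sum_boole]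
  rfl

def cylinderFactor (S : Set X) (b : Fin n → Bool) (σ : Node n) : Set X :=
  if σ.2 = (fun j : Fin σ.1 => b ⟨j, j.2.trans σ.1.2⟩) then
    (fun y => decide (y ∈ S)) ⁻¹' {b σ.1}
  else Set.univ

lemma charBranch_preimage_singleton (S : Set X) (b : Fin n → Bool) :
    charBranch S ⁻¹' {b} = Set.univ.pi (cylinderFactor S b) := by
  ext x
  simp only [Set.mem_preimage, Set.mem_singleton_iff, charBranch_eq_iff, Set.mem_univ_pi,
    cylinderFactor]
  constructor
  · rintro h ⟨i, τ⟩
    split_ifs with hτ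
    · obtain rfl : τ = (node b i).2 := hτ
      exact (h i).symm
    · trivial
  · intro h i
    exact (if_pos rfl ▸ h (node b i) :).symm

variable [MeasurableSpace X]

lemma measurableSet_cylinderFactor {S : Set X} (hS : MeasurableSet S) (b : Fin n → Bool)
    (σ : Node n) : MeasurableSet (cylinderFactor S b σ) := by
  unfold cylinderFactor
  split_ifs
  · exact measurable_decide_mem hS (measurableSet_singleton _)
  · exact MeasurableSet.univ

lemma measurable_charBranch {S : Set X} (hS : MeasurableSet S) :
    Measurable (charBranch (n := n) S) :=
  measurable_to_countable' fun b => charBranch_preimage_singleton S b ▸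
    MeasurableSet.univ_pi (measurableSet_cylinderFactor hS b)

theorem map_charBranch_pi (μ : Measure X) [IsProbabilityMeasure μ] {S : Set X}
    (hS : MeasurableSet S) :
    (Measure.pi fun _ : Node n => μ).map (charBranch S) =
      Measure.pi fun _ : Fin n => μ.map (fun y => decide (y ∈ S)) := by
  refine Measure.ext_iff_singleton.mpr fun b => ?_
  rw [Measure.map_apply (measurable_charBranch hS) (measurableSet_singleton b),
    charBranch_preimage_singleton, Measure.pi_pi, Measure.pi_singleton, Fintype.prod_sigma]
  refine Finset.prod_congr rfl fun i _ => ?_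
  simp only [cylinderFactor, apply_ite μ, measure_univ]
  rw [Fintype.prod_eq_single (fun j : Fin i => b ⟨j, j.2.trans i.2⟩) fun τ hτ => if_neg hτ,
    if_pos rfl, Measure.map_apply (measurable_decide_mem hS) (measurableSet_singleton _)]

end TestTree

/-- Weak law of large numbers for thickets: for a measurable event `S` in a probability space
`(X, μ)`, `ε > 0` and `n ≥ 1`, the `μ^{2^n−1}`-probability that a random test tree of height
`n` gives an estimate of `μ(S)` off by at least `ε` is at most `1/(4nε²)`. -/
theorem weak_law_for_thickets {X : Type*} [MeasurableSpace X] (μ : Measure X)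
    [IsProbabilityMeasure μ] (S : Set X) (hS : MeasurableSet S)
    (ε : ℝ) (hε : 0 < ε) (n : ℕ) (hn : 1 ≤ n) :
    (Measure.pi (fun _ : Σ i : Fin n, (Fin i.1 → Bool) => μ))
        {x | ε ≤ |ttest S x - (μ S).toReal|} ≤
      ENNReal.ofReal (1 / (4 * n * ε ^ 2)) := by
  classical
  set ν := μ.map fun y => decide (y ∈ S)
  have : IsProbabilityMeasure ν :=
    Measure.isProbabilityMeasure_map (measurable_decide_mem hS).aemeasurable
  set bit : Bool → ℝ := fun c => if c then 1 else 0
  have hdev : {x | ε ≤ |ttest S x - (μ S).toReal|} =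
      TestTree.charBranch S ⁻¹'
        {b : Fin n → Bool | ε ≤ |sampleMean bit b - ∫ c, bit c ∂ν|} := by
    rw [integral_map_decide_mem μ hS]
    simp only [TestTree.ttest_eq_sampleMean]
    rfl
  rw [hdev, ← Measure.map_apply (TestTree.measurable_charBranch hS) .of_discrete,
    TestTree.map_charBranch_pi μ hS]
  exact measure_abs_sampleMean_sub_integral_ge_le .of_discrete
    (fun c => by cases c <;> simp [bit]) hn hε
end

section
/- Let (X, F) be a set system with op_s-rank equal to k (for some s ≥ 1, k ≥ 0). Then for every 2^s-ary element tree of height n with labels from X, the number of leaves properly labeled by some member of F is at most ∑_{i=0}^{k} (2^s − 1)^{n−i} · C(n,i); that is, ψ^s_F(n) ≤ ∑_{i=0}^{k} (2^s − 1)^{n−i} C(n,i). -/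
/-!
Induct on `n`, assuming only that `F` has no fully labeled tree of height `k`. The leaves of a
tree of height `n + 1` that pass through the root branch `σ` are the leaves of the subtree at `σ`,
labeled by the members of `F` that cut the root label according to `σ`. None of these `2^s`
families has a full tree of height `k + 1`, and at least one has none of height `k`: otherwise
those trees, hung below the root, would form a full tree of height `k + 1` for `F`. Hence the
count is at most `B(n, k) + (2^s - 1) · B(n, k + 1) = B(n + 1, k + 1)` by Pascal's rule.
-/

/-- A `2^s`-ary element tree with labels from `X` assigns to each node (a list of binary
`s`-strings, i.e. elements of `Fin s → Bool`) an `s`-tuple of elements of `X`.  A leaf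
`ξ ∈ (2^s)^n` is properly labeled by `A ⊆ X` if for all `j < n` and `i < s`, the `i`-th
coordinate of the label of the initial segment `ξ|_{[j]}` belongs to `A` iff `ξ(j)(i) = 1`. -/
def OpProper {X : Type*} {s : ℕ} (T : List (Fin s → Bool) → (Fin s → X)) {n : ℕ}
    (ξ : Fin n → (Fin s → Bool)) (A : Set X) : Prop :=
  ∀ (j : Fin n) (i : Fin s), (T ((List.ofFn ξ).take j.1) i ∈ A ↔ ξ j i = true)

/-- There is a `2^s`-ary element tree of height `k` with labels from `X` in which every leaf
is properly labeled by some member of `F`. -/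
def HasOpTree {X : Type*} (F : Set (Set X)) (s k : ℕ) : Prop :=
  ∃ T : List (Fin s → Bool) → (Fin s → X),
    ∀ ξ : Fin k → (Fin s → Bool), ∃ A ∈ F, OpProper T ξ A

lemma ncard_setOf_fin_succ {α : Type*} [Fintype α] {n : ℕ} (P : (Fin (n + 1) → α) → Prop) :
    {ξ | P ξ}.ncard = ∑ a, {η : Fin n → α | P (Fin.cons a η)}.ncard := by
  have e : {ξ | P ξ} ≃ Σ a, {η : Fin n → α | P (Fin.cons a η)} :=
    ((Fin.consEquiv fun _ => α).subtypeEquiv fun _ => Iff.rfl).symm.trans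
      (Equiv.subtypeProdEquivSigmaSubtype fun a η => P (Fin.cons a η))
  rw [← Nat.card_coe_set_eq, Nat.card_congr e, Nat.card_sigma]
  simp only [Nat.card_coe_set_eq]

/-- `opBound a n k` has `k` summands: rank `k` gives the bound `opBound (2 ^ s - 1) n (k + 1)`. -/
def opBound (a n k : ℕ) : ℕ :=
  ∑ i ∈ Finset.range k, a ^ (n - i) * n.choose i

lemma opBound_succ_succ (a n k : ℕ) :
    opBound a (n + 1) (k + 1) = opBound a n k + a * opBound a n (k + 1) := by
  have shift (i : ℕ) :
      a ^ (n - i) * n.choose (i + 1) = a * (a ^ (n - (i + 1)) * n.choose (i + 1)) := by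
    rcases le_or_gt (i + 1) n with h | h
    · rw [show n - i = n - (i + 1) + 1 by omega, pow_succ']
      ring
    · simp [Nat.choose_eq_zero_of_lt h]
  simp only [opBound, Finset.sum_range_succ' _ k, Nat.choose_succ_succ', Nat.add_sub_add_right,
    mul_add, Finset.sum_add_distrib, shift, Finset.mul_sum, tsub_zero, pow_succ',
    Nat.choose_zero_right, mul_one]
  ring

section OpTree

variable {X : Type*} {s : ℕ}

def opLeaves (F : Set (Set X)) (T : List (Fin s → Bool) → (Fin s → X)) (n : ℕ) :
    Set (Fin n → Fin s → Bool) :=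
  {ξ | ∃ A ∈ F, OpProper T ξ A}

def opBranch (F : Set (Set X)) (x : Fin s → X) (σ : Fin s → Bool) : Set (Set X) :=
  {A ∈ F | ∀ i, x i ∈ A ↔ σ i = true}

lemma opBranch_subset (F : Set (Set X)) (x : Fin s → X) (σ : Fin s → Bool) :
    opBranch F x σ ⊆ F :=
  fun _ hA => hA.1

lemma opProper_cons_iff (T : List (Fin s → Bool) → (Fin s → X)) {n : ℕ}
    (σ : Fin s → Bool) (η : Fin n → Fin s → Bool) (A : Set X) :
    OpProper T (Fin.cons σ η) A ↔
      (∀ i, T [] i ∈ A ↔ σ i = true) ∧ OpProper (fun l => T (σ :: l)) η A := by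
  simp [OpProper, Fin.forall_fin_succ, List.ofFn_succ]

lemma mem_opLeaves_cons_iff (F : Set (Set X)) (T : List (Fin s → Bool) → (Fin s → X))
    {n : ℕ} (σ : Fin s → Bool) (η : Fin n → Fin s → Bool) :
    Fin.cons σ η ∈ opLeaves F T (n + 1) ↔
      η ∈ opLeaves (opBranch F (T []) σ) (fun l => T (σ :: l)) n := by
  simp only [opLeaves, opBranch, Set.mem_ofPred_eq, opProper_cons_iff]
  grind

lemma ncard_opLeaves_succ (F : Set (Set X)) (T : List (Fin s → Bool) → (Fin s → X))
    (n : ℕ) :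
    (opLeaves F T (n + 1)).ncard =
      ∑ σ, (opLeaves (opBranch F (T []) σ) (fun l => T (σ :: l)) n).ncard := by
  rw [← Set.ofPred_mem_eq (s := opLeaves F T (n + 1)), ncard_setOf_fin_succ]
  simp only [mem_opLeaves_cons_iff, Set.ofPred_mem_eq]

lemma opLeaves_eq_empty (F : Set (Set X)) (T : List (Fin s → Bool) → (Fin s → X)) (n : ℕ)
    (h : ¬ HasOpTree F s 0) : opLeaves F T n = ∅ :=
  Set.eq_empty_of_forall_notMem fun _ ⟨A, hA, _⟩ =>
    h ⟨T, fun _ => ⟨A, hA, fun j => j.elim0⟩⟩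

lemma hasOpTree_mono {F G : Set (Set X)} (h : F ⊆ G) {k : ℕ} (hF : HasOpTree F s k) :
    HasOpTree G s k :=
  let ⟨T, hT⟩ := hF
  ⟨T, fun ξ => let ⟨A, hA, hp⟩ := hT ξ; ⟨A, h hA, hp⟩⟩

lemma hasOpTree_succ_of_forall_opBranch (F : Set (Set X)) (x : Fin s → X) {k : ℕ}
    (h : ∀ σ, HasOpTree (opBranch F x σ) s k) : HasOpTree F s (k + 1) := by
  choose t ht using h
  refine ⟨fun | [] => x | σ :: l => t σ l, fun ξ => ?_⟩
  obtain ⟨A, ⟨hAF, hroot⟩, hp⟩ := ht (ξ 0) (Fin.tail ξ)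
  refine ⟨A, hAF, ?_⟩
  rw [← Fin.cons_self_tail ξ, opProper_cons_iff]
  exact ⟨hroot, hp⟩

theorem ncard_opLeaves_le_opBound {F : Set (Set X)} {k : ℕ} (hk : ¬ HasOpTree F s k)
    (T : List (Fin s → Bool) → (Fin s → X)) (n : ℕ) :
    (opLeaves F T n).ncard ≤ opBound (2 ^ s - 1) n k := by
  induction n generalizing F k T with
  | zero =>
    cases k with
    | zero => simp [opLeaves_eq_empty F T 0 hk]
    | succ k =>
      calc (opLeaves F T 0).ncard ≤ 1 := Set.ncard_le_one_of_subsingleton _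
        _ = opBound (2 ^ s - 1) 0 (k + 1) := by simp [opBound, Finset.sum_range_succ']
  | succ n ih =>
    cases k with
    | zero => simp [opLeaves_eq_empty F T _ hk, opBound]
    | succ k =>
      obtain ⟨σ₀, hσ₀⟩ : ∃ σ₀, ¬ HasOpTree (opBranch F (T []) σ₀) s k := by
        by_contra! h
        exact hk (hasOpTree_succ_of_forall_opBranch F (T []) h)
      have hbranch (σ) : ¬ HasOpTree (opBranch F (T []) σ) s (k + 1) :=
        fun h => hk (hasOpTree_mono (opBranch_subset F (T []) σ) h)
      rw [ncard_opLeaves_succ, ← Finset.add_sum_erase _ _ (Finset.mem_univ σ₀),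
        opBound_succ_succ]
      gcongr
      · exact ih hσ₀ _
      · calc _ ≤ (Finset.univ.erase σ₀).card • opBound (2 ^ s - 1) n (k + 1) :=
              Finset.sum_le_card_nsmul _ _ _ fun σ _ => ih (hbranch σ) _
          _ = (2 ^ s - 1) * opBound (2 ^ s - 1) n (k + 1) := by
              simp [Finset.card_erase_of_mem]

end OpTree

theorem op_rank_shatter_bound_general {X : Type*} (F : Set (Set X)) (s k : ℕ)
    (hrank : HasOpTree F s k ∧ ∀ m : ℕ, k < m → ¬ HasOpTree F s m)
    (n : ℕ) (T : List (Fin s → Bool) → (Fin s → X)) :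
    {ξ : Fin n → (Fin s → Bool) | ∃ A ∈ F, OpProper T ξ A}.ncard ≤
      ∑ i ∈ Finset.range (k + 1), (2 ^ s - 1) ^ (n - i) * n.choose i :=
  ncard_opLeaves_le_opBound (hrank.2 (k + 1) k.lt_succ_self) T n

/-- If `F` has `op_s`-rank `k` (there is a fully properly labeled `2^s`-ary tree of height
`k` but of no greater height), then in any `2^s`-ary element tree of height `n` the number
of leaves properly labeled by members of `F` is at most
`∑_{i=0}^{k} (2^s − 1)^{n−i}·C(n,i)`; that is, `ψ^s_F(n) ≤ ∑_{i=0}^{k} (2^s−1)^{n−i} C(n,i)`. -/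
theorem op_rank_shatter_bound {X : Type*} (F : Set (Set X)) (s k : ℕ) (hs : 1 ≤ s)
    (hrank : HasOpTree F s k ∧ ∀ m : ℕ, k < m → ¬ HasOpTree F s m)
    (n : ℕ) (T : List (Fin s → Bool) → (Fin s → X)) :
    {ξ : Fin n → (Fin s → Bool) | ∃ A ∈ F, OpProper T ξ A}.ncard ≤
      ∑ i ∈ Finset.range (k + 1), (2 ^ s - 1) ^ (n - i) * n.choose i :=
  op_rank_shatter_bound_general F s k hrank n T
end

section
/- Let r ≥ 1 and let F be the dual set system of the set system of open half-spaces in ℝ^r: its base set is the collection H of open affine half-spaces { x ∈ ℝ^r : ⟨a, x⟩ > b } (a ∈ ℝ^r nonzero, b ∈ ℝ), and its sets are, for each point p ∈ ℝ^r, the set { H ∈ H : p ∈ H }. Then for all s ≥ 1 and n ≥ 0, ψ^s_F(n) = (∑_{i=0}^{r} C(s,i))^n; in particular, opR_{r+1}(F) = 0. -/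
/-- The `op_s` shatter function `ψ^s_F(n)`: the maximum number of leaves properly labeled by
members of `F` in a `2^s`-ary element tree of height `n`. -/
noncomputable def opShatter {X : Type*} (F : Set (Set X)) (s n : ℕ) : ℕ :=
  sSup {m : ℕ | ∃ T : List (Fin s → Bool) → (Fin s → X),
    m = {ξ : Fin n → (Fin s → Bool) | ∃ A ∈ F, OpProper T ξ A}.ncard}

/-- The collection of open affine half-spaces `{x ∈ ℝ^r : ⟨a,x⟩ > b}` (`a ≠ 0`). -/
def HalfSpaces (r : ℕ) : Set (Set (Fin r → ℝ)) :=
  {H | ∃ (a : Fin r → ℝ) (b : ℝ), a ≠ 0 ∧ H = {x | b < ∑ i, a i * x i}}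

/-- The dual set system of the system of open half-spaces in `ℝ^r`: its base set is the
collection of half-spaces, with one set `{H : p ∈ H}` for each point `p ∈ ℝ^r`. -/
def DualHalfSpaces (r : ℕ) : Set (Set (HalfSpaces r)) :=
  Set.range fun p : Fin r → ℝ => {H : HalfSpaces r | p ∈ H.1}

open Finset Filter Topology

section SetSystem

variable {X : Type*}

def patterns {ι : Type*} (F : Set (Set X)) (x : ι → X) : Set (ι → Bool) :=
  {ε | ∃ A ∈ F, ∀ i, x i ∈ A ↔ ε i = true}

def properLeaves {s : ℕ} (F : Set (Set X)) (T : List (Fin s → Bool) → Fin s → X) (n : ℕ) :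
    Set (Fin n → Fin s → Bool) :=
  {ξ | ∃ A ∈ F, OpProper T ξ A}

lemma opProper_succ_iff {s n : ℕ} {T : List (Fin s → Bool) → Fin s → X}
    {ξ : Fin (n + 1) → Fin s → Bool} {A : Set X} :
    OpProper T ξ A ↔
      (∀ i, T [] i ∈ A ↔ ξ 0 i = true) ∧ OpProper (fun l => T (ξ 0 :: l)) (Fin.tail ξ) A := by
  simp only [OpProper, Fin.forall_fin_succ, List.ofFn_succ, Fin.val_zero, List.take_zero,
    Fin.val_succ, List.take_succ_cons]
  rfl

theorem ncard_patterns_le_sum_choose {ι : Type*} [Fintype ι] [DecidableEq ι]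
    (F : Set (Set X)) (x : ι → X) {r : ℕ}
    (h : ∀ t : Finset ι, r < #t → ∃ u ⊆ t, ∀ A ∈ F, ∃ i ∈ t, ¬(x i ∈ A ↔ i ∈ u)) :
    (patterns F x).ncard ≤ ∑ k ∈ range (r + 1), (Fintype.card ι).choose k := by
  classical
  let support : (ι → Bool) → Finset ι := fun ε => univ.filter fun i => ε i = true
  have support_inj : Function.Injective support := fun ε ε' h =>
    funext fun i => Bool.eq_iff_iff.2 (by simpa [support] using congrArg (i ∈ ·) h)
  set 𝒜 := (patterns F x).toFinset.image support
  have hvc : 𝒜.vcDim ≤ r := Finset.sup_le fun t ht => by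
    by_contra! hrt
    obtain ⟨u, hut, hu⟩ := h t hrt
    obtain ⟨_, hu𝒜, htu⟩ := mem_shatterer.1 ht hut
    obtain ⟨ε, hε, rfl⟩ := mem_image.1 hu𝒜
    obtain ⟨A, hA, hεA⟩ := Set.mem_toFinset.1 hε
    obtain ⟨i, hi, hne⟩ := hu A hA
    exact hne (by rw [hεA, ← htu]; simp [support, hi])
  calc (patterns F x).ncard = #𝒜 := by
        rw [Set.ncard_eq_toFinset_card', card_image_of_injective _ support_inj]
    _ ≤ #𝒜.shatterer := card_le_card_shatterer 𝒜
    _ ≤ ∑ k ∈ Iic 𝒜.vcDim, (Fintype.card ι).choose k := card_shatterer_le_sum_vcDim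
    _ ≤ ∑ k ∈ range (r + 1), (Fintype.card ι).choose k := by
        rw [Nat.range_succ_eq_Iic]
        exact sum_le_sum_of_subset (Iic_subset_Iic.2 hvc)

theorem ncard_properLeaves_le {s N : ℕ} {F : Set (Set X)}
    (hN : ∀ x : Fin s → X, (patterns F x).ncard ≤ N) (n : ℕ)
    (T : List (Fin s → Bool) → Fin s → X) : (properLeaves F T n).ncard ≤ N ^ n := by
  classical
  induction n generalizing T with
  | zero => exact (Set.ncard_le_one_of_subsingleton _).trans_eq (pow_zero N).symm
  | succ n ih =>
    have hroot : ∀ ξ ∈ (properLeaves F T (n + 1)).toFinset, ξ 0 ∈ (patterns F (T [])).toFinset := by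
      intro ξ hξ
      obtain ⟨A, hA, hξA⟩ := Set.mem_toFinset.1 hξ
      exact Set.mem_toFinset.2 ⟨A, hA, (opProper_succ_iff.1 hξA).1⟩
    have hfiber : ∀ ε, #{ξ ∈ (properLeaves F T (n + 1)).toFinset | ξ 0 = ε} ≤ N ^ n := by
      intro ε
      refine le_trans ?_ ((Set.ncard_eq_toFinset_card' _).symm.trans_le (ih fun l => T (ε :: l)))
      refine card_le_card_of_injOn Fin.tail (fun ξ hξ => ?_) (fun ξ hξ ξ' hξ' h => ?_)
      · obtain ⟨hleaf, rfl⟩ := mem_filter.1 (mem_coe.1 hξ)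
        obtain ⟨A, hA, hξA⟩ := Set.mem_toFinset.1 hleaf
        exact Set.mem_toFinset.2 ⟨A, hA, (opProper_succ_iff.1 hξA).2⟩
      · rw [← Fin.cons_self_tail ξ, ← Fin.cons_self_tail ξ', h, (mem_filter.1 (mem_coe.1 hξ)).2,
          (mem_filter.1 (mem_coe.1 hξ')).2]
    rw [Set.ncard_eq_toFinset_card', card_eq_sum_card_fiberwise hroot, pow_succ']
    calc _ ≤ #(patterns F (T [])).toFinset • N ^ n := sum_le_card_nsmul _ _ _ fun ε _ => hfiber ε
      _ ≤ N * N ^ n := by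
        rw [smul_eq_mul, ← Set.ncard_eq_toFinset_card']
        exact Nat.mul_le_mul_right _ (hN _)

lemma opShatter_eq {F : Set (Set X)} {s n m : ℕ}
    (hle : ∀ T : List (Fin s → Bool) → Fin s → X, (properLeaves F T n).ncard ≤ m)
    (hge : ∃ T : List (Fin s → Bool) → Fin s → X, m ≤ (properLeaves F T n).ncard) :
    opShatter F s n = m := by
  obtain ⟨T, hT⟩ := hge
  refine IsGreatest.csSup_eq ⟨⟨T, (hT.antisymm (hle T))⟩, ?_⟩
  rintro _ ⟨T', rfl⟩
  exact hle T'

lemma hasOpTree_zero {F : Set (Set X)} {A : Set X} (hA : A ∈ F) (x : X) (s : ℕ) :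
    HasOpTree F s 0 :=
  ⟨fun _ _ => x, fun _ => ⟨A, hA, fun j => j.elim0⟩⟩

lemma not_hasOpTree {F : Set (Set X)} {s m : ℕ} (h : ∀ x : Fin s → X, ∃ ε, ε ∉ patterns F x)
    (hm : 0 < m) : ¬HasOpTree F s m := by
  rintro ⟨T, hT⟩
  obtain ⟨ε, hε⟩ := h (T [])
  obtain ⟨k, rfl⟩ := Nat.exists_eq_add_one_of_ne_zero hm.ne'
  obtain ⟨A, hA, hεA⟩ := hT fun _ => ε
  exact hε ⟨A, hA, (opProper_succ_iff.1 hεA).1⟩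

end SetSystem

section SignPatterns

variable {𝕜 ι : Type*} [Field 𝕜] [LinearOrder 𝕜] [IsStrictOrderedRing 𝕜]

lemma mul_nonneg_of_pos_iff {g v : 𝕜} (h : 0 < v ↔ 0 < g) : 0 ≤ g * v := by
  by_cases hg : 0 < g
  · exact (mul_pos hg (h.2 hg)).le
  · exact mul_nonneg_of_nonpos_of_nonpos (not_lt.1 hg) (not_lt.1 (mt h.1 hg))

theorem exists_sign_pattern_not_realized {r : ℕ} (a : ι → Fin r → 𝕜) (b : ι → 𝕜)
    {t : Finset ι} (ht : r < #t) :
    ∃ u ⊆ t, ∀ p : Fin r → 𝕜, ∃ i ∈ t, ¬(b i < a i ⬝ᵥ p ↔ i ∈ u) := by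
  classical
  obtain ⟨g, hg, i₀, hi₀, hgi₀⟩ := not_linearIndepOn_finset_iff.1
    fun hli : LinearIndepOn 𝕜 a (t : Set ι) =>
      ht.not_ge (by simpa using hli.fintype_card_le_finrank)
  have hconst : ∀ p, ∑ i ∈ t, g i * (a i ⬝ᵥ p - b i) = -∑ i ∈ t, g i * b i := fun p => by
    have := congrArg (· ⬝ᵥ p) hg
    simp only [sum_dotProduct, smul_dotProduct, smul_eq_mul, zero_dotProduct] at this
    simp only [mul_sub, sum_sub_distrib, this, zero_sub]
  by_contra! hall
  obtain ⟨p, hp⟩ := hall (t.filter (0 < g ·)) (filter_subset _ _)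
  obtain ⟨q, hq⟩ := hall (t.filter (g · < 0)) (filter_subset _ _)
  have hp' : ∀ i ∈ t, 0 < a i ⬝ᵥ p - b i ↔ 0 < g i := fun i hi => by
    simpa [sub_pos, hi] using hp i hi
  have hq' : ∀ i ∈ t, 0 < a i ⬝ᵥ q - b i ↔ 0 < -g i := fun i hi => by
    simpa [sub_pos, hi] using hq i hi
  have hp0 : ∀ i ∈ t, 0 ≤ g i * (a i ⬝ᵥ p - b i) := fun i hi => mul_nonneg_of_pos_iff (hp' i hi)
  have hq0 : ∀ i ∈ t, 0 ≤ -g i * (a i ⬝ᵥ q - b i) := fun i hi => mul_nonneg_of_pos_iff (hq' i hi)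
  -- the affine combination `∑ g i (a i ⬝ᵥ x - b i)` is constant in `x`, yet `p` makes it
  -- nonnegative and `q` nonpositive, strictly so on the side where `g i₀` lies
  rcases hgi₀.lt_or_gt with hneg | hpos
  · have := sum_pos' hq0 ⟨i₀, hi₀, mul_pos (neg_pos.2 hneg) ((hq' i₀ hi₀).2 (neg_pos.2 hneg))⟩
    have := sum_nonneg hp0
    simp only [neg_mul, sum_neg_distrib, hconst] at *
    linarith
  · have := sum_pos' hp0 ⟨i₀, hi₀, mul_pos hpos ((hp' i₀ hi₀).2 hpos)⟩
    have := sum_nonneg hq0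
    simp only [neg_mul, sum_neg_distrib, hconst] at *
    linarith

end SignPatterns

section HalfSpaces

variable {r : ℕ} {ι : Type*}

def halfSpace (a : Fin r → ℝ) (b : ℝ) (ha : a ≠ 0) : HalfSpaces r :=
  ⟨{p | b < a ⬝ᵥ p}, a, b, ha, rfl⟩

lemma exists_affine_eq (x : ι → HalfSpaces r) :
    ∃ (a : ι → Fin r → ℝ) (b : ι → ℝ), ∀ i, (x i : Set (Fin r → ℝ)) = {p | b i < a i ⬝ᵥ p} := by
  choose a b _ hab using fun i => (x i).2
  exact ⟨a, b, hab⟩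

lemma patterns_dualHalfSpaces (x : ι → HalfSpaces r) :
    patterns (DualHalfSpaces r) x = {ε | ∃ p, ∀ i, p ∈ (x i : Set (Fin r → ℝ)) ↔ ε i = true} := by
  simp [patterns, DualHalfSpaces]

theorem ncard_patterns_dualHalfSpaces_le [Fintype ι] [DecidableEq ι] (x : ι → HalfSpaces r) :
    (patterns (DualHalfSpaces r) x).ncard ≤ ∑ k ∈ range (r + 1), (Fintype.card ι).choose k := by
  refine ncard_patterns_le_sum_choose _ _ fun t ht => ?_
  obtain ⟨a, b, hab⟩ := exists_affine_eq x
  obtain ⟨u, hut, hu⟩ := exists_sign_pattern_not_realized a b ht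
  refine ⟨u, hut, ?_⟩
  rintro _ ⟨p, rfl⟩
  simpa [hab] using hu p

lemma exists_notMem_patterns_dualHalfSpaces (x : Fin (r + 1) → HalfSpaces r) :
    ∃ ε, ε ∉ patterns (DualHalfSpaces r) x := by
  classical
  obtain ⟨a, b, hab⟩ := exists_affine_eq x
  obtain ⟨u, -, hu⟩ := exists_sign_pattern_not_realized a b (t := univ) (by simp)
  refine ⟨fun i => decide (i ∈ u), ?_⟩
  rw [patterns_dualHalfSpaces]
  rintro ⟨p, hp⟩
  obtain ⟨i, -, hi⟩ := hu p
  exact hi (by simpa [hab] using hp i)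

end HalfSpaces

section SignCells

variable {r : ℕ} {ι : Type*}

def signCell (a : ι → Fin r → ℝ) (b : ι → ℝ) (ε : ι → Bool) : Set (Fin r → ℝ) :=
  {p | ∀ i, if ε i then b i < a i ⬝ᵥ p else a i ⬝ᵥ p < b i}

lemma isOpen_signCell [Finite ι] (a : ι → Fin r → ℝ) (b : ι → ℝ) (ε : ι → Bool) :
    IsOpen (signCell a b ε) := by
  simp only [signCell, Set.ofPred_forall]
  refine isOpen_iInter_of_finite fun i => ?_
  have hcont : Continuous fun p : Fin r → ℝ => a i ⬝ᵥ p := by fun_prop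
  split_ifs
  exacts [isOpen_lt continuous_const hcont, isOpen_lt hcont continuous_const]

lemma lt_dotProduct_iff_of_mem_signCell {a : ι → Fin r → ℝ} {b : ι → ℝ} {ε : ι → Bool}
    {p : Fin r → ℝ} (hp : p ∈ signCell a b ε) (i : ι) : b i < a i ⬝ᵥ p ↔ ε i = true := by
  have := hp i
  split_ifs at this with h
  · exact iff_of_true this h
  · exact iff_of_false this.not_gt h

lemma add_smul_mem_signCell {a : ι → Fin r → ℝ} {b : ι → ℝ} {ε : ι → Bool} {x : Fin r → ℝ}
    (hx : x ∈ signCell a b ε) {δ : ℝ} (hδ : 0 < δ) (p : Fin r → ℝ) :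
    p + δ • x ∈ signCell a (fun i => δ * b i + a i ⬝ᵥ p) ε := by
  intro i
  have := hx i
  simp only [dotProduct_add, dotProduct_smul, smul_eq_mul]
  split_ifs at this ⊢ <;> nlinarith

/-- Shrinking an arrangement towards a point of `V` moves all of its nonempty cells into `V`. -/
lemma exists_signCell_inter_nonempty [Finite ι] (a : ι → Fin r → ℝ) {b : ι → ℝ}
    {P : Finset (ι → Bool)} (hP : ∀ ε ∈ P, (signCell a b ε).Nonempty)
    {V : Set (Fin r → ℝ)} (hV : IsOpen V) (hVne : V.Nonempty) :
    ∃ b' : ι → ℝ, ∀ ε ∈ P, (V ∩ signCell a b' ε).Nonempty := by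
  choose! w hw using hP
  obtain ⟨p, hp⟩ := hVne
  have hnear : ∀ᶠ δ in 𝓝[>] (0 : ℝ), ∀ ε ∈ P, p + δ • w ε ∈ V := by
    refine (eventually_all_finset P).2 fun ε _ => ?_
    have : Tendsto (fun δ : ℝ => p + δ • w ε) (𝓝 0) (𝓝 p) :=
      Continuous.tendsto' (by fun_prop) 0 p (by simp)
    exact (this.mono_left nhdsWithin_le_nhds).eventually (hV.mem_nhds hp)
  obtain ⟨δ, hδV, hδ⟩ := (hnear.and self_mem_nhdsWithin).exists
  exact ⟨_, fun ε hε => ⟨_, hδV ε hε, add_smul_mem_signCell (hw ε hε) hδ p⟩⟩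

end SignCells

section CellTree

variable {r s : ℕ} (a : Fin s → Fin r → ℝ) (ha : ∀ i, a i ≠ 0) (P : Finset (Fin s → Bool))

noncomputable def cellShift (V : Set (Fin r → ℝ)) : Fin s → ℝ :=
  Classical.epsilon fun b => ∀ ε ∈ P, (V ∩ signCell a b ε).Nonempty

/-- The node reached from the region `V` along the path `l`: each node places the arrangement
`a` so that every pattern of `P` has a cell inside the current region, and the child along `ε`
inherits the region cut down to the cell `ε`. -/
noncomputable def cellTree : Set (Fin r → ℝ) → List (Fin s → Bool) → Fin s → HalfSpaces r
  | V, [] => fun i => halfSpace (a i) (cellShift a P V i) (ha i)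
  | V, ε :: l => cellTree (V ∩ signCell a (cellShift a P V) ε) l

variable {a P}

lemma exists_opProper_cellTree
    (hP : ∀ V, IsOpen V → V.Nonempty → ∃ b, ∀ ε ∈ P, (V ∩ signCell a b ε).Nonempty) :
    ∀ {n : ℕ} {V : Set (Fin r → ℝ)} (ξ : Fin n → Fin s → Bool), IsOpen V → V.Nonempty →
      (∀ j, ξ j ∈ P) → ∃ p ∈ V, OpProper (cellTree a ha P V) ξ {H | p ∈ (H : Set _)}
  | 0, _, _, _, ⟨p, hp⟩, _ => ⟨p, hp, fun j => j.elim0⟩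
  | n + 1, V, ξ, hV, hVne, hξ => by
    have hshift : ∀ ε ∈ P, (V ∩ signCell a (cellShift a P V) ε).Nonempty :=
      Classical.epsilon_spec (hP V hV hVne)
    obtain ⟨p, ⟨hpV, hpcell⟩, hp⟩ := exists_opProper_cellTree hP (Fin.tail ξ)
      (hV.inter (isOpen_signCell _ _ _)) (hshift _ (hξ 0)) fun j => hξ j.succ
    exact ⟨p, hpV, opProper_succ_iff.2 ⟨lt_dotProduct_iff_of_mem_signCell hpcell, hp⟩⟩

lemma pow_card_le_ncard_properLeaves_cellTree
    (hP : ∀ V, IsOpen V → V.Nonempty → ∃ b, ∀ ε ∈ P, (V ∩ signCell a b ε).Nonempty) (n : ℕ) :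
    #P ^ n ≤ (properLeaves (DualHalfSpaces r) (cellTree a ha P Set.univ) n).ncard := by
  rw [← Fintype.card_piFinset_const, ← Set.ncard_coe_finset]
  refine Set.ncard_le_ncard (fun ξ hξ => ?_) (Set.toFinite _)
  obtain ⟨p, -, hp⟩ := exists_opProper_cellTree ha hP ξ isOpen_univ Set.univ_nonempty
    (by simpa using hξ)
  exact ⟨_, ⟨p, rfl⟩, hp⟩

end CellTree

section MomentCurve

open Polynomial

variable {r s : ℕ}

def momentVec (r : ℕ) (t : ℝ) : Fin r → ℝ := fun k => t ^ (k.1 + 1)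

def coeffVec (r : ℕ) (q : ℝ[X]) : Fin r → ℝ := fun k => q.coeff (k.1 + 1)

lemma momentVec_ne_zero (hr : 0 < r) {t : ℝ} (ht : t ≠ 0) : momentVec r t ≠ 0 :=
  fun h => pow_ne_zero 1 ht (congrFun h ⟨0, hr⟩)

lemma momentVec_dotProduct_coeffVec {q : ℝ[X]} (hq : q.natDegree ≤ r) (t : ℝ) :
    momentVec r t ⬝ᵥ coeffVec r q = q.eval t - q.coeff 0 := by
  rw [eval_eq_sum_range' (Nat.lt_succ_of_le hq), sum_range_succ', pow_zero, mul_one,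
    add_sub_cancel_right, dotProduct]
  exact (Fin.sum_univ_eq_sum_range (fun k => t ^ (k + 1) * q.coeff (k + 1)) r).trans
    (sum_congr rfl fun _ _ => mul_comm _ _)

/-- The sign pattern of a polynomial with constant term `-1` that changes sign exactly at the
indices in `D` along the points `1, 2, …, s`. -/
def changePattern (D : Finset (Fin s)) : Fin s → Bool :=
  fun i => decide (Odd #{j ∈ D | j ≤ i})

noncomputable def changePoly (D : Finset (Fin s)) : ℝ[X] :=
  -∏ j ∈ D, (1 - C ((j : ℝ) + 1 / 2)⁻¹ * X)

lemma changePoly_natDegree_le (D : Finset (Fin s)) : (changePoly D).natDegree ≤ #D := by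
  rw [changePoly, natDegree_neg]
  refine (natDegree_prod_le _ _).trans ?_
  have hlin : ∀ c : ℝ, (1 - C c * X).natDegree ≤ 1 := fun c => by compute_degree
  simpa using sum_le_card_nsmul D _ 1 fun j _ => hlin _

lemma changePoly_eval (D : Finset (Fin s)) (t : ℝ) :
    (changePoly D).eval t = -∏ j ∈ D, (1 - ((j : ℝ) + 1 / 2)⁻¹ * t) := by
  simp [changePoly, eval_prod]

lemma changePoly_coeff_zero (D : Finset (Fin s)) : (changePoly D).coeff 0 = -1 := by
  simp [coeff_zero_eq_eval_zero, changePoly_eval]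

lemma neg_one_pow_mul_changePoly_eval_neg (D : Finset (Fin s)) (i : Fin s) :
    0 < (-1) ^ #{j ∈ D | j ≤ i} * -(changePoly D).eval ((i : ℝ) + 1) := by
  rw [changePoly_eval, neg_neg, ← prod_filter_mul_prod_filter_not D (· ≤ i), ← mul_assoc,
    ← prod_neg]
  have hu : ∀ j : Fin s, 0 < (j : ℝ) + 1 / 2 := fun j => by positivity
  refine mul_pos (prod_pos fun j hj => ?_) (prod_pos fun j hj => ?_)
  · have hji : (j : ℝ) ≤ i := by exact_mod_cast (mem_filter.1 hj).2
    have := (one_lt_inv_mul₀ (hu j)).2 (show (j : ℝ) + 1 / 2 < i + 1 by linarith)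
    linarith
  · have hij : (i : ℝ) + 1 ≤ j := by exact_mod_cast Fin.lt_def.1 (not_le.1 (mem_filter.1 hj).2)
    have := (inv_mul_lt_one₀ (hu j)).2 (show (i : ℝ) + 1 < j + 1 / 2 by linarith)
    linarith

lemma coeffVec_changePoly_mem_signCell {D : Finset (Fin s)} (hD : #D ≤ r) :
    coeffVec r (changePoly D) ∈
      signCell (fun i : Fin s => momentVec r ((i : ℝ) + 1)) 1 (changePattern D) := by
  intro i
  have hsign := neg_one_pow_mul_changePoly_eval_neg D i
  simp only [momentVec_dotProduct_coeffVec ((changePoly_natDegree_le D).trans hD),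
    changePoly_coeff_zero, changePattern, Pi.one_apply, decide_eq_true_eq, sub_neg_eq_add]
  split_ifs with hodd
  · rw [hodd.neg_one_pow] at hsign
    linarith
  · rw [(Nat.not_odd_iff_even.1 hodd).neg_one_pow] at hsign
    linarith

lemma card_filter_le_eq (D : Finset (Fin s)) (i : Fin s) :
    #{j ∈ D | j ≤ i} = #{j ∈ D | j < i} + if i ∈ D then 1 else 0 := by
  have hsplit : {j ∈ D | j ≤ i} = {j ∈ D | j < i} ∪ {j ∈ D | j = i} := by
    ext j
    simp [le_iff_lt_or_eq, and_or_left]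
  rw [hsplit, card_union_of_disjoint (disjoint_filter.2 fun j _ h => h.ne), filter_eq' D i]
  split_ifs <;> simp

/-- Two index sets first differ at the least element `i` of their symmetric difference, where the
parities of `#{j ∈ D | j ≤ i}` differ. -/
lemma changePattern_injective : Function.Injective (changePattern (s := s)) := by
  intro D D' h
  by_contra hne
  obtain ⟨i, hi, hmin⟩ := (symmDiff D D').exists_min_image id (symmDiff_nonempty.2 hne)
  have hbelow : {j ∈ D | j < i} = {j ∈ D' | j < i} := by
    ext j
    simp only [mem_filter]
    refine and_congr_left fun hji => ?_
    by_contra hj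
    exact hji.not_ge (hmin j (by rw [mem_symmDiff]; tauto))
  have := congrFun h i
  simp only [changePattern, decide_eq_decide, card_filter_le_eq, hbelow] at this
  rcases mem_symmDiff.1 hi with ⟨h1, h2⟩ | ⟨h1, h2⟩ <;>
    simp [h1, h2, Nat.odd_add_one, ← Nat.not_even_iff_odd] at this

def changePatterns (r s : ℕ) : Finset (Fin s → Bool) :=
  ({D : Finset (Fin s) | #D ≤ r} : Finset _).image changePattern

lemma signCell_nonempty_of_mem_changePatterns {ε : Fin s → Bool} (hε : ε ∈ changePatterns r s) :
    (signCell (fun i : Fin s => momentVec r ((i : ℝ) + 1)) 1 ε).Nonempty := by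
  obtain ⟨D, hD, rfl⟩ := mem_image.1 hε
  exact ⟨_, coeffVec_changePoly_mem_signCell (mem_filter.1 hD).2⟩

lemma card_changePatterns (r s : ℕ) :
    #(changePatterns r s) = ∑ k ∈ range (r + 1), s.choose k := by
  rw [changePatterns, card_image_of_injective _ changePattern_injective,
    card_eq_sum_card_fiberwise (f := card) (t := range (r + 1))
      fun D hD => mem_range.2 (Nat.lt_succ_of_le (mem_filter.1 hD).2)]
  refine sum_congr rfl fun k hk => ?_
  calc _ = #(powersetCard k (univ : Finset (Fin s))) := by
        congr 1
        ext D
        simp only [mem_filter, mem_univ, true_and, mem_powersetCard_univ, mem_range] at hk ⊢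
        omega
    _ = s.choose k := by simp

end MomentCurve

/-- For the dual set system `F` of the set system of open half-spaces in `ℝ^r` (`r ≥ 1`):
for all `s ≥ 1` and `n ≥ 0`, `ψ^s_F(n) = (∑_{i=0}^{r} C(s,i))^n`; in particular
`opR_{r+1}(F) = 0`. -/
theorem dual_halfspaces_shatter (r : ℕ) (hr : 1 ≤ r) :
    (∀ s n : ℕ, 1 ≤ s →
      opShatter (DualHalfSpaces r) s n = (∑ i ∈ Finset.range (r + 1), s.choose i) ^ n) ∧
    (HasOpTree (DualHalfSpaces r) (r + 1) 0 ∧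
      ∀ m : ℕ, 0 < m → ¬ HasOpTree (DualHalfSpaces r) (r + 1) m) := by
  have hmoment : ∀ {s : ℕ} (i : Fin s), momentVec r ((i : ℝ) + 1) ≠ 0 :=
    fun i => momentVec_ne_zero hr (by positivity)
  refine ⟨fun s n _ =>
      opShatter_eq (fun T => ?_) ⟨cellTree _ hmoment (changePatterns r s) .univ, ?_⟩,
    hasOpTree_zero (Set.mem_range_self 0) (halfSpace _ 0 (momentVec_ne_zero hr one_ne_zero)) _,
    fun m hm => not_hasOpTree exists_notMem_patterns_dualHalfSpaces hm⟩
  · simpa using ncard_properLeaves_le ncard_patterns_dualHalfSpaces_le n T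
  · rw [← card_changePatterns]
    exact pow_card_le_ncard_properLeaves_cellTree hmoment (fun V hV hVne =>
      exists_signCell_inter_nonempty _ (fun _ => signCell_nonempty_of_mem_changePatterns) hV hVne) n
end

section
/- Let (X, F) be a set system and let s₁ < s₂ be positive integers. Then opR_{s₁}(F) ≥ ⌊s₂/s₁⌋ · opR_{s₂}(F); in particular, if there is a 2^{s₂}-ary element tree of height n₂ with labels from X in which every leaf can be properly labeled by a member of F, then there is a 2^{s₁}-ary element tree of height ⌊s₂/s₁⌋·n₂ with labels from X in which every leaf can be properly labeled by a member of F. -/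
/-- The `op_s`-rank of `F`, as an extended natural number: the supremum of the heights of
`2^s`-ary element trees in which every leaf is properly labeled by some member of `F`. -/
noncomputable def opRank {X : Type*} (F : Set (Set X)) (s : ℕ) : ℕ∞ :=
  sSup {k : ℕ∞ | ∃ m : ℕ, k = (m : ℕ∞) ∧ HasOpTree F s m}

/-!
Split the first `⌊s₂/s₁⌋·s₁` coordinates of every label of a `2^{s₂}`-ary tree into
`⌊s₂/s₁⌋` blocks of `s₁` coordinates, and drop the others: each level of the tree unfolds into
`⌊s₂/s₁⌋` consecutive levels of a `2^{s₁}`-ary tree, and a set properly labeling a leaf of the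
old tree properly labels the corresponding leaf of the new one. Both steps are inductions on the
height through the recursive description of trees: a tree of height `n + 1` is a root label `x`
together with, for each branch `v`, a tree of height `n` for the members of `F` that `(x, v)`
allows.
-/

section

variable {X : Type*}

def opRestrict {ι : Type*} (F : Set (Set X)) (x : ι → X) (v : ι → Bool) : Set (Set X) :=
  {A ∈ F | ∀ i, x i ∈ A ↔ v i = true}

lemma opRestrict_subset_comp {ι κ : Type*} (F : Set (Set X)) (x : ι → X) (v : ι → Bool)
    (f : κ → ι) : opRestrict F x v ⊆ opRestrict F (x ∘ f) (v ∘ f) :=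
  fun _ ⟨hA, hx⟩ => ⟨hA, fun k => hx (f k)⟩

lemma opRestrict_comp_equiv {ι κ : Type*} (F : Set (Set X)) (x : ι → X) (v : ι → Bool)
    (e : κ ≃ ι) : opRestrict F (x ∘ e) (v ∘ e) = opRestrict F x v := by
  refine (Set.Subset.antisymm ?_ (opRestrict_subset_comp F x v e))
  simpa [Function.comp_def] using opRestrict_subset_comp F (x ∘ e) (v ∘ e) e.symm

lemma HasOpTree.mono {F G : Set (Set X)} {s n : ℕ} (hFG : F ⊆ G) (h : HasOpTree F s n) :
    HasOpTree G s n :=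
  let ⟨T, hT⟩ := h
  ⟨T, fun ξ => let ⟨A, hA, hξ⟩ := hT ξ; ⟨A, hFG hA, hξ⟩⟩

theorem hasOpTree_succ_iff {F : Set (Set X)} {s n : ℕ} :
    HasOpTree F s (n + 1) ↔ ∃ x : Fin s → X, ∀ v, HasOpTree (opRestrict F x v) s n := by
  constructor
  · rintro ⟨T, hT⟩
    refine ⟨T [], fun v => ⟨fun p => T (v :: p), fun ξ => ?_⟩⟩
    obtain ⟨A, hA, hξ⟩ := hT (Fin.cons v ξ)
    refine ⟨A, ⟨hA, fun i => by simpa using hξ 0 i⟩, fun j i => ?_⟩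
    simpa [List.ofFn_succ] using hξ j.succ i
  · rintro ⟨x, hx⟩
    choose T hT using hx
    refine ⟨fun p => p.casesOn x T, fun ξ => ?_⟩
    obtain ⟨A, ⟨hA, hx⟩, hξ⟩ := hT (ξ 0) (Fin.tail ξ)
    refine ⟨A, hA, Fin.cases (fun i => by simpa using hx i) fun j i => ?_⟩
    rw [List.ofFn_succ]
    exact hξ j i

theorem hasOpTree_add_of_forall {F : Set (Set X)} {s r m : ℕ} (x : Fin r → Fin s → X)
    (h : ∀ v : Fin r → Fin s → Bool,
      HasOpTree (opRestrict F (Function.uncurry x) (Function.uncurry v)) s m) :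
    HasOpTree F s (r + m) := by
  induction r generalizing F with
  | zero => simpa [opRestrict] using h finZeroElim
  | succ r ih =>
    rw [Nat.succ_add, hasOpTree_succ_iff]
    refine ⟨x 0, fun v₀ => ih (Fin.tail x) fun v => ?_⟩
    convert h (Fin.cons v₀ v) using 1
    ext A
    simp [opRestrict, Fin.forall_fin_succ, Fin.tail, and_assoc]

theorem HasOpTree.of_arity_le {F : Set (Set X)} {s s' n : ℕ} (hs : s ≤ s')
    (h : HasOpTree F s' n) : HasOpTree F s n := by
  induction n generalizing F with
  | zero =>
    obtain ⟨T, hT⟩ := h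
    obtain ⟨A, hA, -⟩ := hT finZeroElim
    exact ⟨fun _ => T [] ∘ Fin.castLE hs, fun _ => ⟨A, hA, fun j => j.elim0⟩⟩
  | succ n ih =>
    obtain ⟨x, hx⟩ := hasOpTree_succ_iff.mp h
    refine hasOpTree_succ_iff.mpr ⟨x ∘ Fin.castLE hs, fun v => ?_⟩
    let w : Fin s' → Bool := fun i => if hi : i.1 < s then v ⟨i, hi⟩ else false
    have hw : w ∘ Fin.castLE hs = v := funext fun i => by simp [w]
    exact (ih (hx w)).mono (hw ▸ opRestrict_subset_comp F x w _)

theorem HasOpTree.split_arity {F : Set (Set X)} {q s n : ℕ} (hq : 0 < q)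
    (h : HasOpTree F (q * s) n) : HasOpTree F s (q * n) := by
  induction n generalizing F with
  | zero => simpa using h.of_arity_le (Nat.le_mul_of_pos_left s hq)
  | succ n ih =>
    obtain ⟨x, hx⟩ := hasOpTree_succ_iff.mp h
    rw [mul_add_one, add_comm]
    refine hasOpTree_add_of_forall (Function.curry (x ∘ finProdFinEquiv)) fun v => ?_
    convert ih (hx (Function.uncurry v ∘ finProdFinEquiv.symm)) using 1
    rw [Function.uncurry_curry, ← opRestrict_comp_equiv _ _ _ finProdFinEquiv,
      Function.comp_assoc, Equiv.symm_comp_self, Function.comp_id]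

theorem mul_opRank_le_of_forall_hasOpTree {F : Set (Set X)} {s s' q : ℕ}
    (h : ∀ n, HasOpTree F s n → HasOpTree F s' (q * n)) :
    (q : ℕ∞) * opRank F s ≤ opRank F s' := by
  rw [opRank, ENat.mul_sSup]
  refine iSup₂_le ?_
  rintro _ ⟨n, rfl, hn⟩
  have hmem : ((q * n : ℕ) : ℕ∞) ∈ {k : ℕ∞ | ∃ m : ℕ, k = m ∧ HasOpTree F s' m} :=
    ⟨q * n, rfl, h n hn⟩
  exact_mod_cast le_sSup hmem

end

/-- For `0 < s₁ < s₂`: `opR_{s₁}(F) ≥ ⌊s₂/s₁⌋·opR_{s₂}(F)`; in particular, if there is a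
`2^{s₂}`-ary element tree of height `n₂` in which every leaf is properly labeled by a member
of `F`, then there is such a `2^{s₁}`-ary element tree of height `⌊s₂/s₁⌋·n₂`. -/
theorem op_rank_change_base {X : Type*} (F : Set (Set X)) (s₁ s₂ : ℕ)
    (hs₁ : 1 ≤ s₁) (hs : s₁ < s₂) :
    ((s₂ / s₁ : ℕ) : ℕ∞) * opRank F s₂ ≤ opRank F s₁ ∧
    ∀ n₂ : ℕ, HasOpTree F s₂ n₂ → HasOpTree F s₁ (s₂ / s₁ * n₂) := by
  have hq : 0 < s₂ / s₁ := Nat.div_pos hs.le hs₁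
  have key : ∀ n₂ : ℕ, HasOpTree F s₂ n₂ → HasOpTree F s₁ (s₂ / s₁ * n₂) :=
    fun _ h => (h.of_arity_le (Nat.div_mul_le_self s₂ s₁)).split_arity hq
  exact ⟨mul_opRank_le_of_forall_hasOpTree key, key⟩
end

section
/- In the proof of the Thicket Sauer-Shelah Lemma: let (X, F) be a set system of thicket dimension k and let T : 2^{<n} → X be a binary element tree of height n, with n ≥ k+1. Define a (k+1)-fold banned binary sequence problem f of length n by: for S = {s₀ < ⋯ < s_k} ⊆ [n] and X̄ : [n]∖S → {0,1}, let f(S, X̄) be the set of all Z : S → {0,1} such that no member of F properly labels the leaf of the height-(k+1) binary element tree T_{S,X̄} corresponding to Z, where T_{S,X̄} is obtained by restricting T to the paths τ ∈ 2^n extending X̄ and keeping only the branching nodes at heights in S. Then f is a well-defined (each f(S,X̄) is nonempty) hereditary (k+1)-fold banned binary sequence problem, and every leaf of T properly labeled by a member of F corresponds to a solution of f. -/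
/-- The banned binary sequence problem extracted from a binary element tree `T` of height `n`:
for `S ⊆ [n]` and `X̄ : [n]∖S → {0,1}`, the banned set `f(S, X̄)` consists of those
`Z : S → {0,1}` such that no member of `F` properly labels the leaf of the restricted tree
`T_{S,X̄}` corresponding to `Z`, i.e. no `A ∈ F` satisfies
`T((X̄ ∧ Z)|_{[s]}) ∈ A ↔ Z(s) = 1` for every `s ∈ S`. -/
def thicketBanned {X : Type*} (F : Set (Set X)) {n : ℕ} (T : List Bool → X)
    (S : Finset (Fin n)) (Xb : {i : Fin n // i ∉ S} → Bool) :
    Set ({i : Fin n // i ∈ S} → Bool) :=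
  {Z | ¬ ∃ A ∈ F, ∀ (i : Fin n) (h : i ∈ S),
    (T ((List.ofFn (mergeSeq n S Xb Z)).take i.1) ∈ A ↔ Z ⟨i, h⟩ = true)}

section
variable {X : Type*}

lemma key_contra (F : Set (Set X)) (k : ℕ) (hdim : ThicketDimEq F k)
    (n : ℕ) (T : List Bool → X) (S : Finset (Fin n)) (hS : S.card = k + 1)
    (X' : ({i : Fin n // i ∈ S} → Bool) → ({i : Fin n // i ∉ S} → Bool))
    (hX : ∀ Z, Z ∉ thicketBanned F T S (X' Z))
    (hdiff : ∀ Z₁ Z₂, Z₁ ≠ Z₂ → ∀ i : Fin n,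
      (∀ j : Fin n, j < i → mergeSeq n S (X' Z₁) Z₁ j = mergeSeq n S (X' Z₂) Z₂ j) →
      mergeSeq n S (X' Z₁) Z₁ i ≠ mergeSeq n S (X' Z₂) Z₂ i → i ∈ S) : False := by
  classical
  set e := S.orderIsoOfFin hS with he
  set s : Fin (k+1) → Fin n := fun j => (e j : Fin n) with hs
  have hmem : ∀ j, s j ∈ S := fun j => (e j).2
  have smono : StrictMono s := fun a b h => Subtype.coe_lt_coe.mpr (e.strictMono h)
  -- agreement claim
  have hagree : ∀ Z₁ Z₂ (m : Fin (k+1)),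
      (∀ j : Fin (k+1), j < m → Z₁ ⟨s j, hmem j⟩ = Z₂ ⟨s j, hmem j⟩) →
      ∀ i : Fin n, i < s m → mergeSeq n S (X' Z₁) Z₁ i = mergeSeq n S (X' Z₂) Z₂ i := by
    intro Z₁ Z₂ m hZ
    by_cases hZe : Z₁ = Z₂
    · subst hZe; intro i _; rfl
    · have step : ∀ i : Fin n,
          (∀ j : Fin n, j < i → j < s m → mergeSeq n S (X' Z₁) Z₁ j = mergeSeq n S (X' Z₂) Z₂ j) →
          i < s m → mergeSeq n S (X' Z₁) Z₁ i = mergeSeq n S (X' Z₂) Z₂ i := by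
        intro i IH him
        by_cases hiS : i ∈ S
        · obtain ⟨j, hj⟩ : ∃ j : Fin (k+1), s j = i :=
            ⟨e.symm ⟨i, hiS⟩, by simp [hs]⟩
          subst hj
          have hjm : j < m := smono.lt_iff_lt.mp him
          have := hZ j hjm
          simpa [mergeSeq, hmem j] using this
        · by_contra hne
          exact hiS (hdiff Z₁ Z₂ hZe i (fun j hji => IH j hji (hji.trans him)) hne)
      have main : ∀ N : ℕ, ∀ i : Fin n, i.1 ≤ N → i < s m →
          mergeSeq n S (X' Z₁) Z₁ i = mergeSeq n S (X' Z₂) Z₂ i := by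
        intro N
        induction N with
        | zero => intro i hi him
                  exact step i (fun j hji _ => absurd (Nat.lt_of_lt_of_le hji hi) (Nat.not_lt_zero _)) him
        | succ N IHN =>
            intro i hi him
            exact step i (fun j hji hjm => IHN j (Nat.le_of_lt_succ (Nat.lt_of_lt_of_le hji hi)) hjm) him
      intro i him
      exact main i.1 i le_rfl him
  -- the new tree
  let Zof : List Bool → ({i : Fin n // i ∈ S} → Bool) :=
    fun l p => l.getD ((e.symm p : Fin (k+1)) : ℕ) false
  let T' : List Bool → X := fun l =>
    if h : l.length < k + 1 then
      T ((List.ofFn (mergeSeq n S (X' (Zof l)) (Zof l))).take (s ⟨l.length, h⟩).1)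
    else T l
  apply hdim.2 (k+1) (Nat.lt_succ_self k)
  refine ⟨T', fun τ => ?_⟩
  set Zτ : {i : Fin n // i ∈ S} → Bool := fun p => τ (e.symm p) with hZτ
  obtain ⟨A, hAF, hA⟩ := not_not.mp (hX Zτ)
  refine ⟨A, hAF, fun m => ?_⟩
  set l := (List.ofFn τ).take m.1 with hl
  have hlen : l.length = m.1 := by
    simp [hl, Nat.min_eq_left m.2.le]
  have hmlt : l.length < k + 1 := hlen ▸ m.2
  have hfin : (⟨l.length, hmlt⟩ : Fin (k+1)) = m := Fin.ext hlen
  have hT' : T' l = T ((List.ofFn (mergeSeq n S (X' (Zof l)) (Zof l))).take (s m).1) := by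
    show dite _ _ _ = _
    rw [dif_pos hmlt, hfin]
  -- Zof l agrees with Zτ below m
  have hZa : ∀ j : Fin (k+1), j < m → Zof l ⟨s j, hmem j⟩ = Zτ ⟨s j, hmem j⟩ := by
    intro j hjm
    have hsymm : e.symm ⟨s j, hmem j⟩ = j := by
      have : (⟨s j, hmem j⟩ : {x // x ∈ S}) = e j := Subtype.ext rfl
      rw [this, OrderIso.symm_apply_apply]
    have hjl : (j : ℕ) < l.length := hlen ▸ hjm
    have hjn : (j : ℕ) < (List.ofFn τ).length := by
      simp only [List.length_ofFn]; exact j.2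
    simp only [Zof, Zτ, hsymm, hl]
    rw [List.getD_eq_getElem _ _ hjl]
    simp only [hl, List.getElem_take, List.getElem_ofFn, Fin.eta]
  have htake : (List.ofFn (mergeSeq n S (X' (Zof l)) (Zof l))).take (s m).1
      = (List.ofFn (mergeSeq n S (X' Zτ) Zτ)).take (s m).1 := by
    apply List.ext_getElem
    · simp only [List.length_take, List.length_ofFn]
    · intro p h₁ h₂
      simp only [List.length_take, List.length_ofFn] at h₁
      have hpn : p < n := lt_of_lt_of_le h₁ (min_le_right _ _)
      have hps' : p < ((s m : Fin n) : ℕ) := lt_of_lt_of_le h₁ (min_le_left _ _)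
      have hps : (⟨p, hpn⟩ : Fin n) < s m := hps'
      simp only [List.getElem_take, List.getElem_ofFn]
      exact hagree (Zof l) Zτ m hZa ⟨p, hpn⟩ hps
  have hAm := hA (s m) (hmem m)
  have hτm : Zτ ⟨s m, hmem m⟩ = τ m := by
    have : (⟨s m, hmem m⟩ : {x // x ∈ S}) = e m := Subtype.ext rfl
    simp [Zτ, this]
  show T' l ∈ A ↔ τ m = true
  rw [hT', htake, hAm, hτm]

end

/-- If `F` has thicket dimension `k` and `T` is a binary element tree of height `n ≥ k+1`,
then the associated `(k+1)`-fold banned binary sequence problem `thicketBanned F T` is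
well defined (each banned set is nonempty) and hereditary, and every leaf of `T` properly
labeled by a member of `F` corresponds to a solution of it. -/
theorem thicket_tree_banned_problem {X : Type*} (F : Set (Set X)) (k : ℕ)
    (hdim : ThicketDimEq F k) (n : ℕ) (hn : k + 1 ≤ n) (T : List Bool → X) :
    (∀ (S : Finset (Fin n)) (Xb : {i : Fin n // i ∉ S} → Bool),
      S.card = k + 1 → (thicketBanned F T S Xb).Nonempty) ∧
    Hereditary n (k + 1) (thicketBanned F T) ∧
    (∀ τ : Fin n → Bool, (∃ A ∈ F, ProperlyLabeled T τ A) →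
      IsSolution n (k + 1) (thicketBanned F T) τ) := by
  classical
  refine ⟨?_, ?_, ?_⟩
  · -- nonemptiness
    intro S Xb hS
    by_contra hempty
    apply key_contra F k hdim n T S hS (fun _ => Xb)
    · intro Z hZ
      exact hempty ⟨Z, hZ⟩
    · intro Z₁ Z₂ _ i _ hne
      by_contra hiS
      exact hne (by simp [mergeSeq, hiS])
  · -- hereditary
    rintro ⟨S, hS, X', hX, hdiff⟩
    exact key_contra F k hdim n T S hS X' hX hdiff
  · -- solutions
    rintro τ ⟨A, hAF, hA⟩ S hS
    have hmerge : mergeSeq n S (fun i : {i : Fin n // i ∉ S} => τ i.1)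
        (fun i : {i : Fin n // i ∈ S} => τ i.1) = τ := by
      funext i
      by_cases h : i ∈ S <;> simp [mergeSeq, h]
    refine not_not.mpr ⟨A, hAF, ?_⟩
    intro i h
    rw [hmerge]
    exact hA i
end
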